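/- arXiv:2004.13891 — 5 statements merged into one kernel-verified Lean document; each statement's English description precedes it below -/
import Mathlib

section
/- Graham's list scheduling guarantee: for scheduling n jobs with processing times p_j and precedence constraints on m identical machines, any greedy non-idling schedule (one in which no machine is idle whenever there is an available job all of whose predecessors are completed) has makespan at most (1/m)·Σ_j p_j + (1 − 1/m)·Δ, where Δ is the maximum total processing time along any precedence chain. In particular, since the optimum makespan OPT satisfies OPT ≥ (1/m)·Σ_j p_j and OPT ≥ Δ, any greedy schedule is a (2 − 1/m)-approximation. -/
/-!
Fix a greedy schedule and a job `j` finishing last. Walking backwards from `j` to the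
predecessor that completes last, and so on, gives a chain `s` such that at every time slot
before the makespan at which some machine is idle, some job of `s` is running: otherwise the
current job of the walk would be available at that slot, and greediness would keep every
machine busy. Hence at most `(m - 1) · ∑_{c ∈ s} p c` machine-slots are idle, so
`m · Cmax ≤ ∑ p + (m - 1) · ∑_{c ∈ s} p c ≤ ∑ p + (m - 1) · Δ`. For the approximation ratio,
any valid schedule of makespan `C'` has `∑ p ≤ m · C'` (machine capacity) and runs the jobs
of a chain one after another, so `∑_{c ∈ s} p c ≤ C'`.
-/

open Finset

/-- A valid non-preemptive schedule of precedence-constrained jobs on `m` identical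
machines with makespan bound `Cmax`: every job finishes by `Cmax`, if `j ≺ j'` then `j'`
starts after `j` completes, and jobs on the same machine occupy disjoint time intervals. -/
def ValidSchedule {J : Type} (m : ℕ) (p : J → ℕ) (prec : J → J → Prop)
    (start : J → ℕ) (mach : J → Fin m) (Cmax : ℕ) : Prop :=
  (∀ j, start j + p j ≤ Cmax) ∧
  (∀ j j', prec j j' → start j + p j ≤ start j') ∧
  (∀ j j', j ≠ j' → mach j = mach j' →
    start j + p j ≤ start j' ∨ start j' + p j' ≤ start j)

/-- Machine `i` is busy at time `t`: some job scheduled on `i` covers slot `t`. -/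
def Busy {J : Type} (m : ℕ) (p : J → ℕ) (start : J → ℕ) (mach : J → Fin m)
    (i : Fin m) (t : ℕ) : Prop :=
  ∃ j, mach j = i ∧ start j ≤ t ∧ t < start j + p j

/-- Job `j` is available at time `t`: it has not yet started, and all its
predecessors are completed by time `t`. -/
def Available {J : Type} (p : J → ℕ) (prec : J → J → Prop) (start : J → ℕ)
    (j : J) (t : ℕ) : Prop :=
  t < start j ∧ ∀ j', prec j' j → start j' + p j' ≤ t

/-- A greedy non-idling schedule: no machine is idle whenever some available job exists. -/
def Greedy {J : Type} (m : ℕ) (p : J → ℕ) (prec : J → J → Prop)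
    (start : J → ℕ) (mach : J → Fin m) : Prop :=
  ∀ t : ℕ, (∃ j, Available p prec start j t) → ∀ i : Fin m, Busy m p start mach i t

section Scheduling

variable {J : Type} {m : ℕ} {p : J → ℕ} {prec : J → J → Prop} {start : J → ℕ}
  {mach : J → Fin m} {C : ℕ}

lemma sum_card_running_eq_sum (s : Finset J) (hfin : ∀ j, start j + p j ≤ C) :
    ∑ t ∈ range C, #{j ∈ s | start j ≤ t ∧ t < start j + p j} = ∑ j ∈ s, p j := by
  simp only [card_filter]
  rw [sum_comm]
  refine sum_congr rfl fun j _ => ?_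
  have hslots :
      {t ∈ range C | start j ≤ t ∧ t < start j + p j} = Ico (start j) (start j + p j) := by
    ext t
    simp only [mem_filter, mem_range, mem_Ico]
    have := hfin j
    omega
  rw [← card_filter, hslots, Nat.card_Ico, Nat.add_sub_cancel_left]

lemma IsChain.sum_le_makespan {s : Finset J} (hs : IsChain prec (s : Set J))
    (hfin : ∀ j, start j + p j ≤ C) (hprec : ∀ j j', prec j j' → start j + p j ≤ start j') :
    ∑ j ∈ s, p j ≤ C := by
  rw [← sum_card_running_eq_sum s hfin]
  calc ∑ t ∈ range C, #{j ∈ s | start j ≤ t ∧ t < start j + p j}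
      ≤ ∑ _t ∈ range C, 1 := by
        refine sum_le_sum fun t _ => card_le_one.mpr fun a ha b hb => ?_
        simp only [mem_filter] at ha hb
        by_contra hab
        rcases hs ha.1 hb.1 hab with h | h
        · have := hprec _ _ h; omega
        · have := hprec _ _ h; omega
    _ = C := by simp

open scoped Classical in
lemma card_idle_le {s : Finset J} {t : ℕ}
    (hcov : ∀ i, ¬ Busy m p start mach i t → ∃ c ∈ s, start c ≤ t ∧ t < start c + p c) :
    #{i | ¬ Busy m p start mach i t} ≤ (m - 1) * #{c ∈ s | start c ≤ t ∧ t < start c + p c} := by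
  rcases (filter (fun c => start c ≤ t ∧ t < start c + p c) s).eq_empty_or_nonempty with h | ⟨c, hc⟩
  · rw [h, card_empty, mul_zero, Nat.le_zero, card_eq_zero]
    refine filter_eq_empty_iff.mpr fun i _ hi => ?_
    obtain ⟨c, hc, hrun⟩ := hcov i hi
    exact (filter_eq_empty_iff.mp h) hc hrun
  · have hbusy : Busy m p start mach (mach c) t := ⟨c, rfl, (mem_filter.mp hc).2⟩
    have hsub : ({i | ¬ Busy m p start mach i t} : Finset (Fin m)) ⊆ univ.erase (mach c) := by
      intro i hi
      rw [mem_filter] at hi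
      exact mem_erase.mpr ⟨by rintro rfl; exact hi.2 hbusy, mem_univ _⟩
    calc #{i | ¬ Busy m p start mach i t}
        ≤ #(univ.erase (mach c)) := card_le_card hsub
      _ = (m - 1) * 1 := by
          rw [card_erase_of_mem (mem_univ _), card_univ, Fintype.card_fin, mul_one]
      _ ≤ _ := Nat.mul_le_mul_left _ (card_pos.mpr ⟨c, hc⟩)

variable [Fintype J]

open scoped Classical in
lemma card_busy_eq_card_running
    (hdisj : ∀ j j', j ≠ j' → mach j = mach j' →
      start j + p j ≤ start j' ∨ start j' + p j' ≤ start j) (t : ℕ) :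
    #{i | Busy m p start mach i t} = #{j | start j ≤ t ∧ t < start j + p j} := by
  have himage : ({i | Busy m p start mach i t} : Finset (Fin m)) =
      image mach {j | start j ≤ t ∧ t < start j + p j} := by
    ext i
    simp only [mem_filter, mem_univ, true_and, mem_image]
    exact ⟨fun ⟨j, hj, hrun⟩ => ⟨j, hrun, hj⟩, fun ⟨j, hrun, hj⟩ => ⟨j, hj, hrun⟩⟩
  rw [himage]
  refine card_image_of_injOn fun a ha b hb hab => ?_
  simp only [coe_filter, mem_univ, true_and, Set.mem_ofPred_eq] at ha hb
  by_contra hne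
  rcases hdisj a b hne hab with h | h <;> omega

open scoped Classical in
lemma sum_card_busy_eq_sum (hfin : ∀ j, start j + p j ≤ C)
    (hdisj : ∀ j j', j ≠ j' → mach j = mach j' →
      start j + p j ≤ start j' ∨ start j' + p j' ≤ start j) :
    ∑ t ∈ range C, #{i | Busy m p start mach i t} = ∑ j, p j := by
  simp only [card_busy_eq_card_running hdisj]
  exact sum_card_running_eq_sum univ hfin

lemma sum_le_mul_makespan (hfin : ∀ j, start j + p j ≤ C)
    (hdisj : ∀ j j', j ≠ j' → mach j = mach j' →
      start j + p j ≤ start j' ∨ start j' + p j' ≤ start j) :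
    ∑ j, p j ≤ m * C := by
  classical
  rw [← sum_card_busy_eq_sum hfin hdisj]
  calc ∑ t ∈ range C, #{i | Busy m p start mach i t}
      ≤ ∑ _t ∈ range C, m := sum_le_sum fun t _ => (card_le_univ _).trans_eq (Fintype.card_fin m)
    _ = m * C := by rw [sum_const, card_range, smul_eq_mul, mul_comm]

lemma mul_makespan_le_of_covers_idle {s : Finset J} (hfin : ∀ j, start j + p j ≤ C)
    (hdisj : ∀ j j', j ≠ j' → mach j = mach j' →
      start j + p j ≤ start j' ∨ start j' + p j' ≤ start j)
    (hcov : ∀ t < C, ∀ i, ¬ Busy m p start mach i t →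
      ∃ c ∈ s, start c ≤ t ∧ t < start c + p c) :
    m * C ≤ ∑ j, p j + (m - 1) * ∑ c ∈ s, p c := by
  classical
  have hsplit : ∀ t, #{i | Busy m p start mach i t} + #{i | ¬ Busy m p start mach i t} = m :=
    fun t => by rw [card_filter_add_card_filter_not, card_univ, Fintype.card_fin]
  calc m * C
        = ∑ t ∈ range C, (#{i | Busy m p start mach i t} + #{i | ¬ Busy m p start mach i t}) := by
        simp only [hsplit, sum_const, card_range, smul_eq_mul, mul_comm]
    _ ≤ ∑ t ∈ range C, (#{i | Busy m p start mach i t} +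
          (m - 1) * #{c ∈ s | start c ≤ t ∧ t < start c + p c}) :=
        sum_le_sum fun t ht => Nat.add_le_add_left (card_idle_le (hcov t (mem_range.mp ht))) _
    _ = ∑ j, p j + (m - 1) * ∑ c ∈ s, p c := by
        rw [sum_add_distrib, ← mul_sum, sum_card_busy_eq_sum hfin hdisj,
          sum_card_running_eq_sum s hfin]

/-- Induction on `start j`: the chain steps to a predecessor `j'` of `j` that finishes last;
between the end of `j'` and `start j` the job `j` is available, so no machine is idle there. -/
theorem Greedy.exists_chain_covering_idle (hgreedy : Greedy m p prec start mach)
    (hp : ∀ j, 0 < p j) (htrans : Transitive prec)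
    (hprec : ∀ j j', prec j j' → start j + p j ≤ start j') (j : J) :
    ∃ s : Finset J, IsChain prec (s : Set J) ∧ (∀ c ∈ s, c = j ∨ prec c j) ∧
      ∀ t < start j + p j, ∀ i, ¬ Busy m p start mach i t →
        ∃ c ∈ s, start c ≤ t ∧ t < start c + p c := by
  classical
  induction hk : start j using Nat.strong_induction_on generalizing j with
  | _ k ih =>
  subst hk
  by_cases hpred : ∃ j', prec j' j
  · obtain ⟨j', hj'j, hlast⟩ : ∃ j', prec j' j ∧
        ∀ j'', prec j'' j → start j'' + p j'' ≤ start j' + p j' := by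
      obtain ⟨j', hj', hmax⟩ := exists_max_image {j' | prec j' j} (fun j' => start j' + p j')
        (by simpa [filter_nonempty_iff] using hpred)
      exact ⟨j', (mem_filter.mp hj').2, fun j'' h => hmax j'' (by simpa using h)⟩
    have hstart : start j' < start j := by have := hprec _ _ hj'j; have := hp j'; omega
    obtain ⟨s, hs, hsj', hcov⟩ := ih _ hstart j' rfl
    have hsj : ∀ c ∈ s, prec c j := fun c hc => (hsj' c hc).elim (· ▸ hj'j) (htrans · hj'j)
    refine ⟨insert j s, ?_, ?_, fun t ht i hi => ?_⟩
    · rw [coe_insert]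
      exact hs.insert fun c hc _ => Or.inr (hsj c hc)
    · exact fun c hc => (mem_insert.mp hc).imp_right (hsj c)
    by_cases hrun : start j ≤ t
    · exact ⟨j, mem_insert_self _ _, hrun, ht⟩
    by_cases hbefore : t < start j' + p j'
    · obtain ⟨c, hc, hcrun⟩ := hcov t hbefore i hi
      exact ⟨c, mem_insert_of_mem hc, hcrun⟩
    exact absurd (hgreedy t ⟨j, by omega, fun j'' h => (hlast j'' h).trans (by omega)⟩ i) hi
  · rw [not_exists] at hpred
    refine ⟨{j}, by simp [Set.subsingleton_singleton.isChain], by simp, fun t ht i hi => ?_⟩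
    by_cases hrun : start j ≤ t
    · exact ⟨j, mem_singleton_self j, hrun, ht⟩
    exact absurd (hgreedy t ⟨j, by omega, fun j' h => absurd h (hpred j')⟩ i) hi

theorem Greedy.exists_chain_covering_idle_before_makespan (hgreedy : Greedy m p prec start mach)
    (hp : ∀ j, 0 < p j) (htrans : Transitive prec)
    (hprec : ∀ j j', prec j j' → start j + p j ≤ start j') :
    ∃ s : Finset J, IsChain prec (s : Set J) ∧
      ∀ t < univ.sup (fun j => start j + p j), ∀ i, ¬ Busy m p start mach i t →
        ∃ c ∈ s, start c ≤ t ∧ t < start c + p c := by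
  cases isEmpty_or_nonempty J
  · exact ⟨∅, by simp, by simp⟩
  obtain ⟨j, -, hlast⟩ := exists_max_image univ (fun j => start j + p j) univ_nonempty
  obtain ⟨s, hs, -, hcov⟩ := hgreedy.exists_chain_covering_idle hp htrans hprec j
  refine ⟨s, hs, fun t ht => hcov t ?_⟩
  obtain ⟨j', -, hj'⟩ := Finset.lt_sup_iff.mp ht
  exact hj'.trans_le (hlast j' (mem_univ _))

end Scheduling

theorem stmt3_general (n m : ℕ) (hm : 0 < m) (p : Fin n → ℕ) (hp : ∀ j, 0 < p j)
    (prec : Fin n → Fin n → Prop) (htrans : Transitive prec)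
    (start : Fin n → ℕ) (mach : Fin n → Fin m) (Cmax : ℕ)
    (hCmax : Cmax = Finset.univ.sup (fun j => start j + p j))
    (hvalid : ValidSchedule m p prec start mach Cmax)
    (hgreedy : Greedy m p prec start mach)
    (Δ : ℕ)
    (hΔ : ∀ s : Finset (Fin n),
      (∀ a ∈ s, ∀ b ∈ s, a ≠ b → prec a b ∨ prec b a) → ∑ j ∈ s, p j ≤ Δ) :
    (Cmax : ℝ) ≤ (∑ j, (p j : ℝ)) / m + (1 - 1 / (m : ℝ)) * Δ ∧
    ∀ (start' : Fin n → ℕ) (mach' : Fin n → Fin m) (C' : ℕ),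
      ValidSchedule m p prec start' mach' C' → (Cmax : ℝ) ≤ (2 - 1 / (m : ℝ)) * C' := by
  obtain ⟨hfin, hprec, hdisj⟩ := hvalid
  obtain ⟨s, hs, hcov⟩ := hgreedy.exists_chain_covering_idle_before_makespan hp htrans hprec
  have hcount : (m : ℝ) * Cmax ≤ ∑ j, (p j : ℝ) + ((m : ℝ) - 1) * ∑ c ∈ s, (p c : ℝ) := by
    have := mul_makespan_le_of_covers_idle hfin hdisj (hCmax ▸ hcov)
    rw [← Nat.cast_one, ← Nat.cast_sub hm]
    exact_mod_cast this
  have hm1 : (1 : ℝ) ≤ m := by exact_mod_cast hm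
  have hsΔ : ∑ c ∈ s, (p c : ℝ) ≤ Δ := by exact_mod_cast hΔ s hs
  refine ⟨?_, fun start' mach' C' ⟨hfin', hprec', hdisj'⟩ => ?_⟩
  · rw [← mul_le_mul_iff_of_pos_left (by positivity : (0 : ℝ) < m)]
    calc (m : ℝ) * Cmax ≤ ∑ j, (p j : ℝ) + (m - 1) * Δ := by nlinarith
      _ = m * ((∑ j, (p j : ℝ)) / m + (1 - 1 / m) * Δ) := by field_simp
  · have hload : ∑ j, (p j : ℝ) ≤ m * C' := by exact_mod_cast sum_le_mul_makespan hfin' hdisj'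
    have hsC' : ∑ c ∈ s, (p c : ℝ) ≤ C' := by exact_mod_cast hs.sum_le_makespan hfin' hprec'
    rw [← mul_le_mul_iff_of_pos_left (by positivity : (0 : ℝ) < m)]
    calc (m : ℝ) * Cmax ≤ m * C' + (m - 1) * C' := by nlinarith
      _ = m * ((2 - 1 / m) * C') := by field_simp; ring

/-- Graham's bound. Any greedy non-idling schedule has makespan at most
`(1/m)·∑ p_j + (1 − 1/m)·Δ`, where `Δ` bounds the total processing time of every
precedence chain; in particular it is a `(2 − 1/m)`-approximation. -/
theorem stmt3 (n m : ℕ) (hm : 0 < m) (p : Fin n → ℕ) (hp : ∀ j, 0 < p j)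
    (prec : Fin n → Fin n → Prop) (htrans : Transitive prec) (hirrefl : ∀ j, ¬ prec j j)
    (start : Fin n → ℕ) (mach : Fin n → Fin m) (Cmax : ℕ)
    (hCmax : Cmax = Finset.univ.sup (fun j => start j + p j))
    (hvalid : ValidSchedule m p prec start mach Cmax)
    (hgreedy : Greedy m p prec start mach)
    (Δ : ℕ)
    (hΔ : ∀ s : Finset (Fin n),
      (∀ a ∈ s, ∀ b ∈ s, a ≠ b → prec a b ∨ prec b a) → ∑ j ∈ s, p j ≤ Δ) :
    (Cmax : ℝ) ≤ (∑ j, (p j : ℝ)) / m + (1 - 1 / (m : ℝ)) * Δ ∧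
    ∀ (start' : Fin n → ℕ) (mach' : Fin n → Fin m) (C' : ℕ),
      ValidSchedule m p prec start' mach' C' → (Cmax : ℝ) ≤ (2 - 1 / (m : ℝ)) * C' :=
  stmt3_general n m hm p hp prec htrans start mach Cmax hCmax hvalid hgreedy Δ hΔ
end

section
/- Reduction equivalence between the single-machine partial-throughput problem and two-machine non-preemptive precedence scheduling: let I = (J, p, r, d) be an instance of the single-machine problem 1|r_j,d_j|Σ p_j U'_j, let T = Σ_{j∈J} p_j ≥ max_j d_j, and let I' be the P2|prec|C_max instance obtained by adding T unit-length chain jobs j^chain_1 ≺ ... ≺ j^chain_T (with r of j^chain_t equal to t−1 and d equal to t) and setting j ≺ j' for all jobs (original or chain) with d_j ≤ r_{j'}. Then: (a) any solution to I with cost δT yields a schedule for I' of makespan at most (1+δ)T; (b) any schedule for I' of makespan (1+δ)T yields a solution to I of cost at most 2δT. -/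
open Finset

/-- A solution of the single-machine partial-throughput problem `1|r_j,d_j|Σ p_j U'_j`:
each job `j` is processed non-preemptively for `q j ≤ p j` units during `(s j, s j + q j]`,
entirely inside its window `(r j, d j]`, and the processed intervals of distinct
(nontrivially processed) jobs are disjoint. Its cost is `∑ j (p j − q j)`. -/
def PartialSol (n : ℕ) (p r d : Fin n → ℕ) (s q : Fin n → ℕ) : Prop :=
  (∀ j, q j ≤ p j) ∧ (∀ j, r j ≤ s j) ∧ (∀ j, s j + q j ≤ d j) ∧
  (∀ j j', j ≠ j' → 0 < q j → 0 < q j' → s j + q j ≤ s j' ∨ s j' + q j' ≤ s j)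

/-- Sizes in the two-machine instance `I'`: original jobs keep their sizes, chain jobs
are unit length. -/
def redSize (n T : ℕ) (p : Fin n → ℕ) : Fin n ⊕ Fin T → ℕ :=
  Sum.elim p (fun _ => 1)

/-- Release times in `I'`: the `t`-th chain job has release time `t` (0-indexed). -/
def redRel (n T : ℕ) (r : Fin n → ℕ) : Fin n ⊕ Fin T → ℕ :=
  Sum.elim r (fun t => (t : ℕ))

/-- Deadlines in `I'`: the `t`-th chain job has deadline `t + 1`. -/
def redDead (n T : ℕ) (d : Fin n → ℕ) : Fin n ⊕ Fin T → ℕ :=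
  Sum.elim d (fun t => (t : ℕ) + 1)

/-- The precedence order of `I'`: `a ≺ b` iff the deadline of `a` is at most the release
time of `b`. -/
def redPrec (n T : ℕ) (r d : Fin n → ℕ) (a b : Fin n ⊕ Fin T) : Prop :=
  redDead n T d a ≤ redRel n T r b

/-!
(a) Read a solution of `I` on a single machine and stretch time: right after the completion
time of each job insert as many new slots as it discards, and let the job run on through them.
The partially processed jobs then fit on one machine, while the chain jobs and the unprocessed
jobs share the other (an unprocessed job sits in its own inserted gap, at its release time).
Precedences `d a ≤ r b` are respected because the stretch is monotone, and the makespan grows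
by exactly the discarded volume.

(b) Conversely, the chain forces its jobs to start at strictly increasing times. Deleting every
time slot in which no chain job starts turns the schedule into a single-machine solution of `I`
in which each job keeps the units processed in parallel with a chain job; such units cannot
overlap, since the chain job blocks one of the two machines. Only the `Cmax - T` deleted slots
lose units, at most two each.
-/

section WeightBelow

variable {ι α : Type*} [Fintype ι] [LinearOrder α]

def weightBelow (f : ι → α) (w : ι → ℕ) (a : α) : ℕ := ∑ k with f k < a, w k

variable {f : ι → α} {w : ι → ℕ}

theorem weightBelow_add_le_of_lt {i : ι} {a : α} (h : f i < a) :
    weightBelow f w (f i) + w i ≤ weightBelow f w a := by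
  classical
  rw [weightBelow, add_comm, ← sum_insert (by simp)]
  refine sum_le_sum_of_subset (insert_subset (by simpa) fun k hk => ?_)
  simp only [mem_filter, mem_univ, true_and] at hk ⊢
  exact hk.trans h

theorem weightBelow_add_le_sum (i : ι) : weightBelow f w (f i) + w i ≤ ∑ k, w k := by
  classical
  rw [weightBelow, add_comm, ← sum_insert (by simp)]
  exact sum_le_sum_of_subset (subset_univ _)

theorem weightBelow_le_of_forall_eq_zero {a b : α} (hw : ∀ k, b ≤ f k → f k < a → w k = 0) :
    weightBelow f w a ≤ weightBelow f w b := by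
  rw [weightBelow, ← sum_filter_add_sum_filter_not _ (fun k => f k < b), filter_filter]
  have hzero : ∑ k ∈ {k | f k < a} with ¬f k < b, w k = 0 :=
    sum_eq_zero (by simpa using fun k hka hkb => hw k hkb hka)
  rw [hzero, add_zero]
  exact sum_le_sum_of_subset fun k hk => by simp only [mem_filter] at hk ⊢; exact ⟨hk.1, hk.2.2⟩

end WeightBelow

section Stretch

variable {ι : Type*} (s q x : ι → ℕ)

/-- Ordering by completion time, then start time, agrees with "`i` completes before `j` starts"
except between empty intervals at a common point; there the job discarding less goes first. -/
def stretchKey (i : ι) : (ℕ ×ₗ ℕ ×ₗ ℕ) ×ₗ ι := toLex (toLex (s i + q i, toLex (s i, x i)), i)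

variable {s q x} {i j : ι}

theorem stretchKey_injective : Function.Injective (stretchKey s q x) := fun i j h => by
  simpa [stretchKey] using congrArg (fun k => (ofLex k).2) h

variable [LinearOrder ι]

theorem lex_le_of_stretchKey_le (h : stretchKey s q x i ≤ stretchKey s q x j) :
    s i + q i < s j + q j ∨ s i + q i = s j + q j ∧ (s i < s j ∨ s i = s j ∧ x i ≤ x j) := by
  simpa only [stretchKey, ofLex_toLex, Prod.Lex.toLex_le_toLex] using Prod.Lex.monotone_fst _ _ h

variable [Fintype ι]

variable (s q x) in
def stretchStart (i : ι) : ℕ := s i + weightBelow (stretchKey s q x) x (stretchKey s q x i)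

theorem stretchStart_add_le_of_key_lt (hij : s i + q i ≤ s j)
    (hkey : stretchKey s q x i < stretchKey s q x j) :
    stretchStart s q x i + (q i + x i) ≤ stretchStart s q x j := by
  have := weightBelow_add_le_of_lt (w := x) hkey
  unfold stretchStart
  omega

theorem stretchStart_add_le_sum (i : ι) :
    stretchStart s q x i + (q i + x i) ≤ s i + q i + ∑ k, x k := by
  have := weightBelow_add_le_sum (f := stretchKey s q x) (w := x) i
  unfold stretchStart
  omega

theorem stretchStart_add_le_or (hne : i ≠ j) (hij : s i + q i ≤ s j ∨ s j + q j ≤ s i) :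
    stretchStart s q x i + (q i + x i) ≤ stretchStart s q x j ∨
      stretchStart s q x j + (q j + x j) ≤ stretchStart s q x i := by
  rcases lt_or_gt_of_ne (stretchKey_injective.ne hne) with hkey | hkey
  · have := lex_le_of_stretchKey_le hkey.le
    exact .inl (stretchStart_add_le_of_key_lt (by omega) hkey)
  · have := lex_le_of_stretchKey_le hkey.le
    exact .inr (stretchStart_add_le_of_key_lt (by omega) hkey)

theorem stretchStart_add_le (hij : s i + q i ≤ s j) (hx : q i = 0 → s i = s j → x i = 0) :
    stretchStart s q x i + (q i + x i) ≤ stretchStart s q x j := by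
  rcases lt_or_ge (stretchKey s q x i) (stretchKey s q x j) with hkey | hkey
  · exact stretchStart_add_le_of_key_lt hij hkey
  have hji := lex_le_of_stretchKey_le hkey
  have hxi : x i = 0 := hx (by omega) (by omega)
  have hshift : weightBelow (stretchKey s q x) x (stretchKey s q x i) ≤
      weightBelow (stretchKey s q x) x (stretchKey s q x j) :=
    weightBelow_le_of_forall_eq_zero fun k hjk hki => by
      have := lex_le_of_stretchKey_le hjk
      have := lex_le_of_stretchKey_le hki.le
      omega
  unfold stretchStart
  omega

end Stretch

section Forward

variable {n T : ℕ} {p r d s q : Fin n → ℕ}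

theorem PartialSol.exists_start_eq_of_len_eq_zero (hwin : ∀ j, r j + p j ≤ d j)
    (h : PartialSol n p r d s q) :
    ∃ s', PartialSol n p r d s' q ∧ ∀ j, q j = 0 → s' j = r j := by
  obtain ⟨hqp, hrs, hsd, hdisj⟩ := h
  refine ⟨fun j => if q j = 0 then r j else s j, ⟨hqp, fun j => ?_, fun j => ?_, ?_⟩,
    fun j hj => if_pos hj⟩
  · dsimp only
    split_ifs
    exacts [le_rfl, hrs j]
  · have := hwin j
    dsimp only
    split_ifs with hj
    exacts [by omega, hsd j]
  · intro j j' hne hj hj'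
    simpa only [if_neg hj.ne', if_neg hj'.ne'] using hdisj j j' hne hj hj'

variable (T) in
/-- A solution `(s, q)` of `I` read on all jobs of `I'`, the `t`-th chain job being processed
during `(t, t + 1]`. -/
def extStart (s : Fin n → ℕ) : Fin n ⊕ Fin T → ℕ := Sum.elim s (fun t => t)

variable (T) in
def extLen (q : Fin n → ℕ) : Fin n ⊕ Fin T → ℕ := Sum.elim q (fun _ => 1)

variable (T) in
def extLoss (p q : Fin n → ℕ) : Fin n ⊕ Fin T → ℕ := Sum.elim (fun j => p j - q j) (fun _ => 0)

variable (T) in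
def extMach (q : Fin n → ℕ) : Fin n ⊕ Fin T → Fin 2 :=
  Sum.elim (fun j => if q j = 0 then 0 else 1) (fun _ => 0)

theorem redSize_eq_extLen_add_extLoss (hqp : ∀ j, q j ≤ p j) (a : Fin n ⊕ Fin T) :
    redSize n T p a = extLen T q a + extLoss T p q a := by
  rcases a with j | t
  · have := hqp j
    simp only [redSize, extLen, extLoss, Sum.elim_inl]
    omega
  · rfl

theorem PartialSol.extStart_add_le_or (h : PartialSol n p r d s q) {a b : Fin n ⊕ Fin T}
    (hne : a ≠ b) (hm : extMach T q a = extMach T q b) :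
    extStart T s a + extLen T q a ≤ extStart T s b ∨
      extStart T s b + extLen T q b ≤ extStart T s a := by
  rcases a with j | t <;> rcases b with j' | t'
  · by_cases hj : q j = 0 <;> by_cases hj' : q j' = 0 <;> simp [extMach, hj, hj'] at hm
    · simpa only [extStart, extLen, Sum.elim_inl, hj, hj', add_zero] using le_total _ _
    · exact h.2.2.2 j j' (fun h => hne (h ▸ rfl)) (Nat.pos_of_ne_zero hj) (Nat.pos_of_ne_zero hj')
  · have hj : q j = 0 := by_contra fun hj => by simp [extMach, hj] at hm
    simp only [extStart, extLen, Sum.elim_inl, Sum.elim_inr, hj]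
    omega
  · have hj' : q j' = 0 := by_contra fun hj' => by simp [extMach, hj'] at hm
    simp only [extStart, extLen, Sum.elim_inl, Sum.elim_inr, hj']
    omega
  · have : (t : ℕ) ≠ t' := fun h => hne (Fin.ext h ▸ rfl)
    simp only [extStart, extLen, Sum.elim_inr]
    omega

theorem PartialSol.exists_validSchedule (hwin : ∀ j, r j + p j ≤ d j) (hTd : ∀ j, d j ≤ T)
    (h : PartialSol n p r d s q) (hs : ∀ j, q j = 0 → s j = r j) :
    ∃ start mach, ValidSchedule 2 (redSize n T p) (redPrec n T r d) start mach
      (T + ∑ j, (p j - q j)) := by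
  let _ : LinearOrder (Fin n ⊕ Fin T) := LinearOrder.lift' _ (Fintype.equivFin _).injective
  have hsize := redSize_eq_extLen_add_extLoss (T := T) h.1
  have hrel : ∀ a, redRel n T r a ≤ extStart T s a := by
    rintro (j | t)
    exacts [h.2.1 j, le_rfl]
  have hdead : ∀ a, extStart T s a + extLen T q a ≤ redDead n T d a := by
    rintro (j | t)
    exacts [h.2.2.1 j, le_rfl]
  have hdeadT : ∀ a, redDead n T d a ≤ T := by
    rintro (j | t)
    exacts [hTd j, t.isLt]
  have hloss : ∑ a, extLoss T p q a = ∑ j, (p j - q j) := by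
    simp [extLoss, Fintype.sum_sum_type]
  refine ⟨stretchStart (extStart T s) (extLen T q) (extLoss T p q), extMach T q,
    fun a => ?_, fun a b hab => ?_, fun a b hne hm => ?_⟩
  · have := stretchStart_add_le_sum (s := extStart T s) (q := extLen T q) (x := extLoss T p q) a
    have := hdead a
    have := hdeadT a
    rw [hsize]
    omega
  · rw [hsize]
    refine stretchStart_add_le ((hdead a).trans (hab.trans (hrel b))) fun h0 heq => ?_
    have hfit : extStart T s a + redSize n T p a ≤ redDead n T d a := by
      rcases a with j | t
      · simpa [extStart, redSize, redDead, hs j h0] using hwin j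
      · simp [extLen] at h0
    have : redDead n T d a ≤ redRel n T r b := hab
    have := hrel b
    have := hsize a
    omega
  · simp only [hsize]
    exact stretchStart_add_le_or hne (h.extStart_add_le_or hne hm)

end Forward

namespace ValidSchedule

variable {J : Type} {m : ℕ} {p : J → ℕ} {prec : J → J → Prop} {start : J → ℕ} {mach : J → Fin m}
  {Cmax : ℕ}

theorem card_le_of_forall_mem_Ico (hv : ValidSchedule m p prec start mach Cmax) {S : Finset J}
    {u : ℕ} (hS : ∀ j ∈ S, u ∈ Ico (start j) (start j + p j)) : #S ≤ m := by
  simpa using card_le_card_of_injOn mach (fun j _ => mem_coe.2 (mem_univ (mach j)))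
    fun j hj j' hj' hm => by
      by_contra hne
      have := mem_Ico.1 (hS j hj)
      have := mem_Ico.1 (hS j' hj')
      rcases hv.2.2 j j' hne hm with h | h <;> omega

theorem sum_card_inter_Ico_le [Fintype J] (hv : ValidSchedule m p prec start mach Cmax)
    (U : Finset ℕ) : ∑ j, #(U ∩ Ico (start j) (start j + p j)) ≤ m * #U := by
  classical
  calc ∑ j, #(U ∩ Ico (start j) (start j + p j))
      = ∑ j, #{u ∈ U | u ∈ Ico (start j) (start j + p j)} := by simp only [filter_mem_eq_inter]
    _ = ∑ u ∈ U, #{j | u ∈ Ico (start j) (start j + p j)} :=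
      sum_card_bipartiteAbove_eq_sum_card_bipartiteBelow
        fun j u => u ∈ Ico (start j) (start j + p j)
    _ ≤ ∑ _u ∈ U, m := sum_le_sum fun u _ =>
      hv.card_le_of_forall_mem_Ico (u := u) fun j hj => (mem_filter.1 hj).2
    _ = m * #U := by rw [sum_const, smul_eq_mul, mul_comm]

end ValidSchedule

section CountBelow

variable {T : ℕ} {a : Fin T → ℕ}

def countBelow (a : Fin T → ℕ) (u : ℕ) : ℕ := #{t | a t < u}

theorem countBelow_le (a : Fin T → ℕ) (u : ℕ) : countBelow a u ≤ T :=
  (card_filter_le _ _).trans (card_fin T).le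

theorem lt_countBelow_iff (ha : Monotone a) {t : Fin T} {u : ℕ} :
    (t : ℕ) < countBelow a u ↔ a t < u := by
  constructor
  · intro h
    by_contra hu
    have hsub : ({t' | a t' < u} : Finset (Fin T)) ⊆ Iio t := fun t' ht' => by
      simp only [mem_filter, mem_univ, true_and] at ht'
      exact mem_Iio.2 (lt_of_not_ge fun h' => hu ((ha h').trans_lt ht'))
    have := card_le_card hsub
    rw [Fin.card_Iio] at this
    exact lt_irrefl _ (h.trans_le this)
  · intro h
    have hsub : Iic t ⊆ ({t' | a t' < u} : Finset (Fin T)) := fun t' ht' => by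
      simpa using (ha (mem_Iic.1 ht')).trans_lt h
    simpa [countBelow, Fin.card_Iic] using card_le_card hsub

theorem countBelow_add_card {b e : ℕ} (hbe : b ≤ e) :
    countBelow a b + #{t | a t ∈ Ico b e} = countBelow a e := by
  rw [countBelow, countBelow, ← card_union_of_disjoint]
  · congr 1
    ext t
    simp only [mem_union, mem_filter, mem_univ, true_and, mem_Ico]
    omega
  · exact disjoint_filter.2 fun t _ h1 h2 => by simp only [mem_Ico] at h2; omega

end CountBelow

section Backward

variable {n T : ℕ} {p r d : Fin n → ℕ} {start : Fin n ⊕ Fin T → ℕ}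
  {mach : Fin n ⊕ Fin T → Fin 2} {Cmax : ℕ}

theorem ValidSchedule.strictMono_chain {m : ℕ} {mach : Fin n ⊕ Fin T → Fin m}
    (hv : ValidSchedule m (redSize n T p) (redPrec n T r d) start mach Cmax) :
    StrictMono (start ∘ Sum.inr) := fun t t' h => by
  simpa [redSize] using hv.2.1 (Sum.inr t) (Sum.inr t') (show (t : ℕ) + 1 ≤ t' from h)

/-- Deleting the time slots that hold no chain job: job `j` starts at the number of chain
jobs started before it, and keeps the units processed in parallel with a chain job. -/
def compressStart (start : Fin n ⊕ Fin T → ℕ) (j : Fin n) : ℕ :=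
  countBelow (start ∘ Sum.inr) (start (Sum.inl j))

def compressLen (p : Fin n → ℕ) (start : Fin n ⊕ Fin T → ℕ) (j : Fin n) : ℕ :=
  #{t | start (Sum.inr t) ∈ Ico (start (Sum.inl j)) (start (Sum.inl j) + p j)}

theorem compressStart_add_compressLen (j : Fin n) :
    compressStart start j + compressLen p start j =
      countBelow (start ∘ Sum.inr) (start (Sum.inl j) + p j) :=
  countBelow_add_card (Nat.le_add_right _ _)

theorem mem_Ico_compress_iff (ha : Monotone (start ∘ Sum.inr)) (j : Fin n) (t : Fin T) :
    (t : ℕ) ∈ Ico (compressStart start j) (compressStart start j + compressLen p start j) ↔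
      start (Sum.inr t) ∈ Ico (start (Sum.inl j)) (start (Sum.inl j) + p j) := by
  rw [compressStart_add_compressLen, compressStart, mem_Ico, mem_Ico, ← not_lt,
    lt_countBelow_iff ha, lt_countBelow_iff ha, not_lt]
  rfl

theorem ValidSchedule.compress_disjoint
    (hv : ValidSchedule 2 (redSize n T p) (redPrec n T r d) start mach Cmax) {j j' : Fin n}
    (hne : j ≠ j') (hj : 0 < compressLen p start j) (hj' : 0 < compressLen p start j') :
    compressStart start j + compressLen p start j ≤ compressStart start j' ∨
      compressStart start j' + compressLen p start j' ≤ compressStart start j := by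
  by_contra hcon
  push Not at hcon
  have hlt : max (compressStart start j) (compressStart start j') < T := by
    have := countBelow_le (start ∘ Sum.inr) (start (Sum.inl j) + p j)
    rw [← compressStart_add_compressLen] at this
    omega
  obtain ⟨t, ht⟩ : ∃ t : Fin T, (t : ℕ) = max (compressStart start j) (compressStart start j') :=
    ⟨⟨_, hlt⟩, rfl⟩
  have ha := hv.strictMono_chain.monotone
  have hrun_j := (mem_Ico_compress_iff (p := p) ha j t).1 (mem_Ico.2 (by omega))
  have hrun_j' := (mem_Ico_compress_iff (p := p) ha j' t).1 (mem_Ico.2 (by omega))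
  have hrun : ∀ a ∈ ({Sum.inl j, Sum.inl j', Sum.inr t} : Finset (Fin n ⊕ Fin T)),
      start (Sum.inr t) ∈ Ico (start a) (start a + redSize n T p a) := by
    simp [redSize, mem_Ico.1 hrun_j, mem_Ico.1 hrun_j']
  have := hv.card_le_of_forall_mem_Ico hrun
  rw [card_eq_three.2 ⟨_, _, _, by simpa using hne, by simp, by simp, rfl⟩] at this
  omega

theorem ValidSchedule.partialSol_compress (hwin : ∀ j, r j + p j ≤ d j) (hTd : ∀ j, d j ≤ T)
    (hv : ValidSchedule 2 (redSize n T p) (redPrec n T r d) start mach Cmax) :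
    PartialSol n p r d (compressStart start) (compressLen p start) := by
  have ha := hv.strictMono_chain
  refine ⟨fun j => ?_, fun j => ?_, fun j => ?_,
    fun j j' hne hj hj' => hv.compress_disjoint hne hj hj'⟩
  · simpa [compressLen] using card_le_card_of_injOn
      (t := Ico (start (Sum.inl j)) (start (Sum.inl j) + p j))
      (start ∘ Sum.inr) (fun t ht => by simpa using ht) ha.injective.injOn
  · rcases Nat.eq_zero_or_pos (r j) with h0 | hpos
    · simp [h0]
    have hlt : r j - 1 < T := by have := hwin j; have := hTd j; omega
    have hprec := hv.2.1 (Sum.inr ⟨r j - 1, hlt⟩) (Sum.inl j) (show r j - 1 + 1 ≤ r j by omega)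
    simp only [redSize, Sum.elim_inr] at hprec
    have := (lt_countBelow_iff ha.monotone (t := ⟨r j - 1, hlt⟩) (u := start (Sum.inl j))).2
      (by simp; omega)
    rw [compressStart]
    simp only at this
    omega
  · rw [compressStart_add_compressLen]
    rcases (hTd j).lt_or_eq with hlt | heq
    · have hprec := hv.2.1 (Sum.inl j) (Sum.inr ⟨d j, hlt⟩) le_rfl
      simp only [redSize, Sum.elim_inl] at hprec
      refine not_lt.1 fun hcon => ?_
      have := (lt_countBelow_iff ha.monotone (t := ⟨d j, hlt⟩)).1 hcon
      simp only [Function.comp_apply] at this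
      omega
    · exact (countBelow_le _ _).trans_eq heq.symm

def chainSlots (start : Fin n ⊕ Fin T → ℕ) : Finset ℕ := univ.image (start ∘ Sum.inr)

theorem ValidSchedule.sub_compressLen_le
    (hv : ValidSchedule 2 (redSize n T p) (redPrec n T r d) start mach Cmax) (j : Fin n) :
    p j - compressLen p start j ≤
      #((range Cmax \ chainSlots start) ∩ Ico (start (Sum.inl j)) (start (Sum.inl j) + p j)) := by
  classical
  set R := Ico (start (Sum.inl j)) (start (Sum.inl j) + p j)
  have hRC : R ∩ chainSlots start ⊆ ({t | start (Sum.inr t) ∈ R} : Finset (Fin T)).image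
      (start ∘ Sum.inr) := by
    intro u hu
    simp only [chainSlots, mem_inter, mem_image, mem_univ, true_and, Function.comp_apply] at hu
    obtain ⟨hu, t, rfl⟩ := hu
    exact mem_image_of_mem _ (by simpa using hu)
  have hRU : R \ chainSlots start ⊆ (range Cmax \ chainSlots start) ∩ R := by
    intro u hu
    obtain ⟨huR, huC⟩ := mem_sdiff.1 hu
    have : start (Sum.inl j) + p j ≤ Cmax := hv.1 (Sum.inl j)
    have := mem_Ico.1 huR
    exact mem_inter.2 ⟨mem_sdiff.2 ⟨mem_range.2 (by omega), huC⟩, huR⟩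
  have := card_inter_add_card_sdiff R (chainSlots start)
  have : #(R ∩ chainSlots start) ≤ compressLen p start j :=
    (card_le_card hRC).trans card_image_le
  have := card_le_card hRU
  rw [Nat.card_Ico] at *
  omega

theorem ValidSchedule.sum_sub_compressLen_add_le
    (hv : ValidSchedule 2 (redSize n T p) (redPrec n T r d) start mach Cmax) :
    ∑ j, (p j - compressLen p start j) + 2 * T ≤ 2 * Cmax := by
  classical
  have hsub : chainSlots start ⊆ range Cmax := by
    simp only [chainSlots, image_subset_iff, mem_univ, mem_range, forall_const,
      Function.comp_apply]
    intro t
    simpa [redSize] using hv.1 (Sum.inr t)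
  have hcard : #(chainSlots start) = T := by
    rw [chainSlots, card_image_of_injective _ hv.strictMono_chain.injective, card_fin]
  have hidle : #(range Cmax \ chainSlots start) = Cmax - T := by
    rw [card_sdiff_of_subset hsub, card_range, hcard]
  have hT : T ≤ Cmax := hcard ▸ (card_le_card hsub).trans (card_range _).le
  have hrun := hv.sum_card_inter_Ico_le (range Cmax \ chainSlots start)
  simp only [Fintype.sum_sum_type, redSize, Sum.elim_inl, Sum.elim_inr] at hrun
  have hchain : ∀ t, #((range Cmax \ chainSlots start) ∩
      Ico (start (Sum.inr t)) (start (Sum.inr t) + 1)) = 0 := fun t => by simp [chainSlots]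
  simp only [hchain, sum_const_zero, add_zero] at hrun
  have := sum_le_sum fun j (_ : j ∈ univ) => hv.sub_compressLen_le j
  omega

end Backward

theorem stmt12_general (n : ℕ) (p r d : Fin n → ℕ)
    (hwin : ∀ j, r j + p j ≤ d j)
    (T : ℕ) (hTd : ∀ j, d j ≤ T)
    (δ : ℝ) :
    ((∃ s q : Fin n → ℕ, PartialSol n p r d s q ∧
        ((∑ j, (p j - q j) : ℕ) : ℝ) ≤ δ * T) →
      ∃ (start : Fin n ⊕ Fin T → ℕ) (mach : Fin n ⊕ Fin T → Fin 2) (Cmax : ℕ),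
        ValidSchedule 2 (redSize n T p) (redPrec n T r d) start mach Cmax ∧
        (Cmax : ℝ) ≤ (1 + δ) * T) ∧
    ((∃ (start : Fin n ⊕ Fin T → ℕ) (mach : Fin n ⊕ Fin T → Fin 2) (Cmax : ℕ),
        ValidSchedule 2 (redSize n T p) (redPrec n T r d) start mach Cmax ∧
        (Cmax : ℝ) ≤ (1 + δ) * T) →
      ∃ s q : Fin n → ℕ, PartialSol n p r d s q ∧
        ((∑ j, (p j - q j) : ℕ) : ℝ) ≤ 2 * δ * T) := by
  constructor
  · rintro ⟨s, q, hsol, hcost⟩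
    obtain ⟨s', hsol', hs'⟩ := hsol.exists_start_eq_of_len_eq_zero hwin
    obtain ⟨start, mach, hv⟩ := hsol'.exists_validSchedule hwin hTd hs'
    refine ⟨start, mach, _, hv, ?_⟩
    rw [Nat.cast_add]
    linarith
  · rintro ⟨start, mach, Cmax, hv, hCmax⟩
    refine ⟨_, _, hv.partialSol_compress hwin hTd, ?_⟩
    have : ((∑ j, (p j - compressLen p start j) : ℕ) : ℝ) + 2 * T ≤ 2 * Cmax := by
      exact_mod_cast hv.sum_sub_compressLen_add_le
    linarith

/-- equivalence of the single-machine partial-throughput problem and the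
constructed two-machine non-preemptive precedence instance `I'` with `T` unit chain jobs:
(a) a solution of cost at most `δT` gives a schedule of `I'` with makespan at most
`(1+δ)T`; (b) a schedule of `I'` with makespan at most `(1+δ)T` gives a solution of
cost at most `2δT`. -/
theorem stmt12 (n : ℕ) (p r d : Fin n → ℕ)
    (hwin : ∀ j, r j + p j ≤ d j)
    (T : ℕ) (hT : T = ∑ j, p j) (hTd : ∀ j, d j ≤ T)
    (δ : ℝ) (hδ : 0 ≤ δ) :
    ((∃ s q : Fin n → ℕ, PartialSol n p r d s q ∧
        ((∑ j, (p j - q j) : ℕ) : ℝ) ≤ δ * T) →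
      ∃ (start : Fin n ⊕ Fin T → ℕ) (mach : Fin n ⊕ Fin T → Fin 2) (Cmax : ℕ),
        ValidSchedule 2 (redSize n T p) (redPrec n T r d) start mach Cmax ∧
        (Cmax : ℝ) ≤ (1 + δ) * T) ∧
    ((∃ (start : Fin n ⊕ Fin T → ℕ) (mach : Fin n ⊕ Fin T → Fin 2) (Cmax : ℕ),
        ValidSchedule 2 (redSize n T p) (redPrec n T r d) start mach Cmax ∧
        (Cmax : ℝ) ≤ (1 + δ) * T) →
      ∃ s q : Fin n → ℕ, PartialSol n p r d s q ∧
        ((∑ j, (p j - q j) : ℕ) : ℝ) ≤ 2 * δ * T) :=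
  stmt12_general n p r d hwin T hTd δ
end

section
/- Lower bound on the optimum of the laminar gap instance: let L be a sufficiently large integer with L+1 a power of 2, and consider the instance of 1|r_j,d_j|Σ p_j U'_j whose jobs form a full binary tree of L+1 levels, where each of the 2^ℓ jobs at level ℓ has size 2^{L−ℓ}, and the k-th job from the left at level ℓ has release time (L+1)(k−1)2^{L−ℓ} and deadline (L+1)k·2^{L−ℓ}; so T = Σ_j p_j = (L+1)2^L = max_j d_j. Then every feasible solution processes at most 0.8·T job units, i.e., the optimum cost is at least 0.2·T. -/
/-!
Let `H = (L + 1) / 2` and split the levels into the top half `ℓ < H` and the bottom half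
`ℓ ≥ H`; each half has total size `T / 2`. A top job processed during `(S, S + Q]` contains all
but at most two of the level-`ℓ` windows it meets, so at every bottom level it forbids jobs of
total size at least `Q / (L + 1) - 2 ^ (L - ℓ + 1)`, and over the `H` bottom levels about `Q / 2`.
Different top jobs forbid disjoint sets, and there are fewer than `2 ^ H` of them, so if the top
jobs are processed for `t` units, the forbidden bottom volume is at least `t / 2 - 4 · 2 ^ L`.
Hence at most `t + T / 2 - t / 2 + 4 · 2 ^ L ≤ 3 T / 4 + 4 · 2 ^ L ≤ 0.8 T` units are processed.
-/

open Finset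

/-- A job is a pair `⟨ℓ, k⟩`: the `k`-th job (counting from `0`) at level `ℓ`. -/
def TreeJob (L : ℕ) := (ℓ : Fin (L + 1)) × Fin (2 ^ (ℓ : ℕ))

instance (L : ℕ) : Fintype (TreeJob L) := by unfold TreeJob; infer_instance

def treeSize (L : ℕ) (j : TreeJob L) : ℕ := 2 ^ (L - (j.1 : ℕ))

def treeRel (L : ℕ) (j : TreeJob L) : ℕ := (L + 1) * (j.2 : ℕ) * 2 ^ (L - (j.1 : ℕ))

def treeDead (L : ℕ) (j : TreeJob L) : ℕ := (L + 1) * ((j.2 : ℕ) + 1) * 2 ^ (L - (j.1 : ℕ))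

def coveredWindows (n w S Q : ℕ) : Finset (Fin n) :=
  {k | S ≤ k * w ∧ (k + 1) * w ≤ S + Q}

lemma le_card_coveredWindows_add_two_mul {n w S Q : ℕ} (hw : 0 < w) (h : S + Q ≤ n * w) :
    Q ≤ (#(coveredWindows n w S Q) + 2) * w := by
  set a := S / w
  set c := (S + Q) / w
  have ha : a * w ≤ S := Nat.div_mul_le_self _ _
  have ha' : S < a * w + w := Nat.lt_div_mul_add hw
  have hc : c * w ≤ S + Q := Nat.div_mul_le_self _ _
  have hc' : S + Q < c * w + w := Nat.lt_div_mul_add hw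
  have hcn : c ≤ n := Nat.div_le_of_le_mul (by rwa [mul_comm])
  have hcard : c - (a + 1) ≤ #(coveredWindows n w S Q) := by
    rw [← Nat.card_Ico, ← card_map Fin.valEmbedding]
    refine card_le_card fun m hm => ?_
    rw [mem_Ico] at hm
    refine mem_map.2 ⟨⟨m, by omega⟩, mem_filter.2 ⟨mem_univ _, ?_, ?_⟩, rfl⟩
    · nlinarith [Nat.mul_le_mul_right w hm.1]
    · nlinarith [Nat.mul_le_mul_right w hm.2]
  nlinarith [Nat.mul_le_mul_right w (show c ≤ #(coveredWindows n w S Q) + 1 + a by omega)]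

lemma card_filter_le_val (n H : ℕ) : #(univ.filter fun ℓ : Fin n => H ≤ ℓ) = n - H := by
  have := card_filter_add_card_filter_not (s := (univ : Finset (Fin n)))
    fun ℓ : Fin n => (ℓ : ℕ) < H
  simp only [Fin.card_filter_val_lt, card_univ, Fintype.card_fin, not_lt] at this
  omega

lemma sum_two_pow_sub_lt (L H : ℕ) :
    ∑ ℓ ∈ univ.filter (fun ℓ : Fin (L + 1) => H ≤ ℓ), 2 ^ (L - ℓ) < 2 ^ (L + 1 - H) := by
  rw [← sum_image (g := fun ℓ : Fin (L + 1) => L - ℓ) (f := (2 ^ ·)) ?_]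
  · refine Nat.geomSum_lt le_rfl fun e he => ?_
    obtain ⟨ℓ, hℓ, rfl⟩ := mem_image.1 he
    have := (mem_filter.1 hℓ).2
    omega
  · intro ℓ _ ℓ' _ h
    have := ℓ.isLt
    have := ℓ'.isLt
    exact Fin.ext (by simp only at h; omega)

namespace TreeJob

variable {L : ℕ}

instance : DecidableEq (TreeJob L) := by unfold TreeJob; infer_instance

lemma level_le (j : TreeJob L) : (j.1 : ℕ) ≤ L := Nat.lt_succ_iff.mp j.1.isLt

lemma treeRel_eq (j : TreeJob L) : treeRel L j = j.2 * ((L + 1) * 2 ^ (L - j.1)) := by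
  unfold treeRel; ring

lemma treeDead_eq (j : TreeJob L) : treeDead L j = (j.2 + 1) * ((L + 1) * 2 ^ (L - j.1)) := by
  unfold treeDead; ring

lemma treeRel_lt_treeDead (j : TreeJob L) : treeRel L j < treeDead L j := by
  rw [treeRel_eq, treeDead_eq]
  exact Nat.mul_lt_mul_of_pos_right (Nat.lt_succ_self _) (by positivity)

lemma treeDead_le (j : TreeJob L) : treeDead L j ≤ (L + 1) * 2 ^ L := by
  calc treeDead L j ≤ 2 ^ (j.1 : ℕ) * ((L + 1) * 2 ^ (L - j.1)) := by
        rw [treeDead_eq]; exact Nat.mul_le_mul_right _ j.2.isLt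
    _ = (L + 1) * 2 ^ L := by rw [mul_left_comm, pow_mul_pow_sub 2 j.level_le]

lemma sum_filter_level {M : Type*} [AddCommMonoid M] (P : ℕ → Prop) [DecidablePred P]
    (f : TreeJob L → M) :
    ∑ j ∈ univ.filter (fun j : TreeJob L => P j.1), f j =
      ∑ ℓ ∈ univ.filter (fun ℓ : Fin (L + 1) => P ℓ), ∑ k, f ⟨ℓ, k⟩ := by
  rw [sum_filter, sum_filter]
  exact (Fintype.sum_sigma _).trans (sum_congr rfl fun ℓ _ => by split_ifs <;> simp)

lemma sum_treeSize_filter_level (P : ℕ → Prop) [DecidablePred P] :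
    ∑ j ∈ univ.filter (fun j : TreeJob L => P j.1), treeSize L j =
      #(univ.filter (fun ℓ : Fin (L + 1) => P ℓ)) * 2 ^ L := by
  rw [sum_filter_level, card_eq_sum_ones, sum_mul]
  refine sum_congr rfl fun ℓ _ => ?_
  simp only [treeSize, sum_const, card_univ, Fintype.card_fin, smul_eq_mul, one_mul]
  exact pow_mul_pow_sub 2 (Nat.lt_succ_iff.mp ℓ.isLt)

lemma card_filter_level_lt (H : ℕ) :
    #(univ.filter (fun j : TreeJob L => (j.1 : ℕ) < H)) < 2 ^ H := by
  rw [card_eq_sum_ones, sum_filter_level (· < H)]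
  simp only [sum_const, card_univ, Fintype.card_fin, smul_eq_mul, mul_one]
  refine (sum_map _ Fin.valEmbedding (2 ^ ·)).symm.trans_lt (Nat.geomSum_lt le_rfl fun e he => ?_)
  obtain ⟨ℓ, hℓ, rfl⟩ := mem_map.1 he
  exact (mem_filter.1 hℓ).2

end TreeJob

open TreeJob

def coveredBelow (L H S Q : ℕ) : Finset (TreeJob L) :=
  (univ.filter fun ℓ : Fin (L + 1) => H ≤ ℓ).sigma fun ℓ =>
    coveredWindows (2 ^ (ℓ : ℕ)) ((L + 1) * 2 ^ (L - ℓ)) S Q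

lemma mem_coveredBelow {L H S Q : ℕ} {v : TreeJob L} :
    v ∈ coveredBelow L H S Q ↔ H ≤ v.1 ∧ S ≤ treeRel L v ∧ treeDead L v ≤ S + Q :=
  mem_sigma.trans (by simp [coveredWindows, treeRel_eq, treeDead_eq])

lemma sub_mul_le_sum_treeSize_coveredBelow {L H S Q : ℕ} (h : S + Q ≤ (L + 1) * 2 ^ L) :
    (L + 1 - H) * Q ≤
      (L + 1) * ∑ v ∈ coveredBelow L H S Q, treeSize L v + 2 * (L + 1) * 2 ^ (L + 1 - H) := by
  set F := univ.filter fun ℓ : Fin (L + 1) => H ≤ ℓ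
  set c := fun ℓ : Fin (L + 1) => #(coveredWindows (2 ^ (ℓ : ℕ)) ((L + 1) * 2 ^ (L - ℓ)) S Q)
  have hwindows (ℓ : Fin (L + 1)) : Q ≤ (c ℓ + 2) * ((L + 1) * 2 ^ (L - ℓ)) := by
    refine le_card_coveredWindows_add_two_mul (by positivity) (h.trans_eq ?_)
    rw [mul_left_comm, pow_mul_pow_sub 2 (Nat.lt_succ_iff.mp ℓ.isLt)]
  have hmass : ∑ v ∈ coveredBelow L H S Q, treeSize L v = ∑ ℓ ∈ F, c ℓ * 2 ^ (L - ℓ) :=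
    (sum_sigma _ _ (treeSize L)).trans (sum_congr rfl fun ℓ _ => sum_const_nat fun _ _ => rfl)
  calc (L + 1 - H) * Q = ∑ ℓ ∈ F, Q := by rw [sum_const, card_filter_le_val, smul_eq_mul]
    _ ≤ ∑ ℓ ∈ F, (c ℓ + 2) * ((L + 1) * 2 ^ (L - ℓ)) := sum_le_sum fun ℓ _ => hwindows ℓ
    _ = (L + 1) * ∑ v ∈ coveredBelow L H S Q, treeSize L v +
          2 * (L + 1) * ∑ ℓ ∈ F, 2 ^ (L - ℓ) := by
      rw [hmass, mul_sum, mul_sum, ← sum_add_distrib]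
      exact sum_congr rfl fun ℓ _ => by ring
    _ ≤ _ := by gcongr; exact (sum_two_pow_sub_lt L H).le

section Schedule

variable {L H : ℕ} {s q : TreeJob L → ℕ}

def topJobs (L H : ℕ) : Finset (TreeJob L) := univ.filter fun j => (j.1 : ℕ) < H

def bottomJobs (L H : ℕ) : Finset (TreeJob L) := univ.filter fun j => H ≤ (j.1 : ℕ)

def forbiddenJobs (L H : ℕ) (s q : TreeJob L → ℕ) : Finset (TreeJob L) :=
  (topJobs L H).biUnion fun j => coveredBelow L H (s j) (q j)

lemma pairwiseDisjoint_coveredBelow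
    (hdisj : ∀ j j', j ≠ j' → 0 < q j → 0 < q j' → s j + q j ≤ s j' ∨ s j' + q j' ≤ s j)
    (T : Set (TreeJob L)) :
    T.PairwiseDisjoint fun j => coveredBelow L H (s j) (q j) := by
  intro j _ j' _ hne
  refine disjoint_left.2 fun v hv hv' => ?_
  rw [mem_coveredBelow] at hv hv'
  have := treeRel_lt_treeDead v
  rcases hdisj j j' hne (by omega) (by omega) with h | h <;> omega

lemma eq_zero_of_mem_forbiddenJobs
    (hrel : ∀ j, treeRel L j ≤ s j) (hdead : ∀ j, s j + q j ≤ treeDead L j)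
    (hdisj : ∀ j j', j ≠ j' → 0 < q j → 0 < q j' → s j + q j ≤ s j' ∨ s j' + q j' ≤ s j)
    {v : TreeJob L} (hv : v ∈ forbiddenJobs L H s q) : q v = 0 := by
  obtain ⟨j, hj, hv⟩ := mem_biUnion.1 hv
  rw [mem_coveredBelow] at hv
  have hjv : j ≠ v := by rintro rfl; have := (mem_filter.1 hj).2; omega
  have := treeRel_lt_treeDead v
  have := hrel v
  have := hdead v
  by_contra hqv
  rcases hdisj j v hjv (by omega) (by omega) with h | h <;> omega

lemma forbiddenJobs_subset_bottomJobs : forbiddenJobs L H s q ⊆ bottomJobs L H := fun v hv => by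
  obtain ⟨j, -, hv⟩ := mem_biUnion.1 hv
  exact mem_filter.2 ⟨mem_univ v, (mem_coveredBelow.1 hv).1⟩

lemma sum_treeSize_topJobs (hH : H ≤ L + 1) :
    ∑ j ∈ topJobs L H, treeSize L j = H * 2 ^ L := by
  rw [topJobs, sum_treeSize_filter_level (· < H), Fin.card_filter_val_lt, min_eq_right hH]

lemma sum_treeSize_bottomJobs :
    ∑ j ∈ bottomJobs L H, treeSize L j = (L + 1 - H) * 2 ^ L := by
  rw [bottomJobs, sum_treeSize_filter_level (H ≤ ·), card_filter_le_val]

lemma sub_mul_sum_topJobs_le (hH : H ≤ L + 1) (hdead : ∀ j, s j + q j ≤ treeDead L j)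
    (hdisj : ∀ j j', j ≠ j' → 0 < q j → 0 < q j' → s j + q j ≤ s j' ∨ s j' + q j' ≤ s j) :
    (L + 1 - H) * ∑ j ∈ topJobs L H, q j ≤
      (L + 1) * ∑ v ∈ forbiddenJobs L H s q, treeSize L v + 2 * (L + 1) * 2 ^ (L + 1) := by
  have htop : #(topJobs L H) * 2 ^ (L + 1 - H) ≤ 2 ^ (L + 1) := by
    rw [← pow_mul_pow_sub 2 hH]
    exact Nat.mul_le_mul_right _ (card_filter_level_lt H).le
  calc (L + 1 - H) * ∑ j ∈ topJobs L H, q j = ∑ j ∈ topJobs L H, (L + 1 - H) * q j :=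
        mul_sum ..
    _ ≤ ∑ j ∈ topJobs L H, ((L + 1) * ∑ v ∈ coveredBelow L H (s j) (q j), treeSize L v +
          2 * (L + 1) * 2 ^ (L + 1 - H)) :=
      sum_le_sum fun j _ =>
        sub_mul_le_sum_treeSize_coveredBelow ((hdead j).trans (treeDead_le j))
    _ = (L + 1) * ∑ v ∈ forbiddenJobs L H s q, treeSize L v +
          2 * (L + 1) * (#(topJobs L H) * 2 ^ (L + 1 - H)) := by
      rw [sum_add_distrib, ← mul_sum, forbiddenJobs,
        sum_biUnion (pairwiseDisjoint_coveredBelow hdisj _), sum_const, smul_eq_mul]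
      ring
    _ ≤ _ := by gcongr

lemma sum_bottomJobs_add_sum_forbiddenJobs_le (hq : ∀ j, q j ≤ treeSize L j)
    (hrel : ∀ j, treeRel L j ≤ s j) (hdead : ∀ j, s j + q j ≤ treeDead L j)
    (hdisj : ∀ j j', j ≠ j' → 0 < q j → 0 < q j' → s j + q j ≤ s j' ∨ s j' + q j' ≤ s j) :
    ∑ j ∈ bottomJobs L H, q j + ∑ v ∈ forbiddenJobs L H s q, treeSize L v ≤
      (L + 1 - H) * 2 ^ L := by
  have hsub := forbiddenJobs_subset_bottomJobs (L := L) (H := H) (s := s) (q := q)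
  rw [← sum_treeSize_bottomJobs, ← sum_sdiff hsub (f := q), ← sum_sdiff hsub (f := treeSize L),
    sum_eq_zero fun v hv => eq_zero_of_mem_forbiddenJobs hrel hdead hdisj hv, add_zero]
  gcongr with j
  exact hq j

lemma five_mul_sum_le (hH : L + 1 = 2 * H) (h40 : 40 ≤ H)
    (hq : ∀ j, q j ≤ treeSize L j) (hrel : ∀ j, treeRel L j ≤ s j)
    (hdead : ∀ j, s j + q j ≤ treeDead L j)
    (hdisj : ∀ j j', j ≠ j' → 0 < q j → 0 < q j' → s j + q j ≤ s j' ∨ s j' + q j' ≤ s j) :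
    5 * ∑ j, q j ≤ 4 * ((L + 1) * 2 ^ L) := by
  have hsplit : ∑ j ∈ topJobs L H, q j + ∑ j ∈ bottomJobs L H, q j = ∑ j, q j := by
    simpa only [topJobs, bottomJobs, not_lt] using
      sum_filter_add_sum_filter_not univ (fun j : TreeJob L => (j.1 : ℕ) < H) q
  have htop := sub_mul_sum_topJobs_le (H := H) (by omega) hdead hdisj
  have hbot := sum_bottomJobs_add_sum_forbiddenJobs_le (H := H) hq hrel hdead hdisj
  have hsize : ∑ j ∈ topJobs L H, q j ≤ H * 2 ^ L :=
    (sum_le_sum fun j _ => hq j).trans_eq (sum_treeSize_topJobs (by omega))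
  rw [show L + 1 - H = H by omega] at htop hbot
  have htop' : ∑ j ∈ topJobs L H, q j ≤
      2 * ∑ v ∈ forbiddenJobs L H s q, treeSize L v + 8 * 2 ^ L := by
    refine Nat.le_of_mul_le_mul_left (htop.trans_eq ?_) (by omega : 0 < H)
    rw [pow_succ, hH]; ring
  have h40' := Nat.mul_le_mul_right (2 ^ L) h40
  have hT : (L + 1) * 2 ^ L = 2 * (H * 2 ^ L) := by rw [hH]; ring
  linarith

end Schedule

/-- Job `j` is processed during `(s j, s j + q j]`; jobs with `q j = 0` are not processed. -/
theorem stmt13 :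
    ∃ L₀ : ℕ, ∀ L : ℕ, L₀ ≤ L → (∃ e : ℕ, L + 1 = 2 ^ e) →
      ∀ s q : TreeJob L → ℕ,
        (∀ j, q j ≤ treeSize L j) →
        (∀ j, treeRel L j ≤ s j) →
        (∀ j, s j + q j ≤ treeDead L j) →
        (∀ j j', j ≠ j' → 0 < q j → 0 < q j' →
          s j + q j ≤ s j' ∨ s j' + q j' ≤ s j) →
        ((∑ j, q j : ℕ) : ℝ) ≤ 0.8 * (((L : ℝ) + 1) * 2 ^ L) := by
  refine ⟨79, fun L hL ⟨e, he⟩ s q hq hrel hdead hdisj => ?_⟩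
  obtain ⟨H, hH⟩ : 2 ∣ L + 1 := by
    rcases e with _ | e
    · omega
    · exact he ▸ dvd_pow_self 2 e.succ_ne_zero
  have h := five_mul_sum_le hH (by omega) hq hrel hdead hdisj
  have h' : (5 * ∑ j, q j : ℝ) ≤ 4 * ((L + 1) * 2 ^ L) := by exact_mod_cast h
  rw [show (0.8 : ℝ) = 4 / 5 by norm_num]
  linarith
end

section
/- Sherali-Adams feasibility of the laminar gap instance: for the L+1-level full-binary-tree instance of 1|r_j,d_j|Σ p_j U'_j above (T = (L+1)2^L, n = 2^{L+1}−1 jobs), consider the LP with variables x_{j,t} for each job j and each of the L+1 start times t ∈ [r_j, d_j) that are multiples of p_j, with constraints: Σ_{(j,t)} x_{j,t} p_j ≥ (1−ε)T; Σ_t x_{j,t} ≤ 1 for each j; Σ_{(j,t): t' ∈ (t, t+p_j]} x_{j,t} ≤ 1 for each time t' ∈ [T]; and x_{j,t} ≥ 0. Setting ε' = ε/4 and q = ⌊ε'(L+1)⌋, the assignment x_S = ((1−ε')/(L+1))^{|S|} for every conflict-free set S of at most q pairs (and x_S = 0 for sets with conflicts) is a feasible solution to the q-round Sherali-Adams lift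 of this LP. -/
/-!
Put `ρ = (1 - ε/4)/(L+1)`, so that `x_S = ρ^|S|` on conflict-free `S`. A lifted row at `(S, T)` is
linear in the values `y_{S,T} = ∑_{T' ⊆ T} (-1)^|T'| x_{S ∪ T'}`: it equals
`(∑_{v ∈ S} c_v - d) y_{S,T} + ∑_{v ∉ S ∪ T} c_v y_{S+v,T}`. Here `y_{S,T}` is `ρ^|S|` times an
alternating sum over the conflict-free extensions of `S` inside `T`; these form a down-closed
family, so that sum lies in `[1 - ρ|T|, 1]`, and in particular `y ≥ 0`.

A packing row (one job, or one time slot) runs over at most `L+1` pairwise conflicting pairs `A`;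
by inclusion-exclusion it collapses to `-y_{S,T ∪ A} ≤ 0`, or to `0` when `S` already meets `A`.
For the objective row, a pair blocks weighted mass at most `(2(L+1)+4)·2^L` out of the total
`(L+1)²·2^L`, so while `|S| + |T| < ε(L+1)/4` the pairs that still extend `S` carry enough mass
to pay for the target `(1-ε)·(L+1)·2^L`.
-/

open Finset

instance (L : ℕ) : DecidableEq (TreeJob L) := by unfold TreeJob; infer_instance

/-- The variable index set of the LP: a job together with one of its `L+1` candidate
start times (the multiples of `p_j` inside the window). -/
def SAIdx (L : ℕ) := TreeJob L × Fin (L + 1)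

instance (L : ℕ) : Fintype (SAIdx L) := by unfold SAIdx; infer_instance
instance (L : ℕ) : DecidableEq (SAIdx L) := by unfold SAIdx; infer_instance

/-- The start time represented by an index: `r_j + a·p_j`. -/
def istart (L : ℕ) (v : SAIdx L) : ℕ := treeRel L v.1 + (v.2 : ℕ) * treeSize L v.1

/-- A set `S` of (job, start-time) pairs is conflict-free iff no job appears twice and
the processing intervals `(t, t + p_j]` of distinct pairs do not overlap
(i.e. `S` does not "lead to a contradiction"). -/
def ConflictFree (L : ℕ) (S : Finset (SAIdx L)) : Prop :=
  ∀ a ∈ S, ∀ b ∈ S, a ≠ b →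
    a.1 ≠ b.1 ∧
    (istart L a + treeSize L a.1 ≤ istart L b ∨ istart L b + treeSize L b.1 ≤ istart L a)

instance (L : ℕ) (S : Finset (SAIdx L)) : Decidable (ConflictFree L S) := by
  unfold ConflictFree; infer_instance

/-- The candidate Sherali-Adams solution: `x_S = ((1−ε/4)/(L+1))^{|S|}` for conflict-free
`S`, and `0` otherwise. -/
noncomputable def xsol (L : ℕ) (ε : ℝ) (S : Finset (SAIdx L)) : ℝ :=
  if ConflictFree L S then ((1 - ε / 4) / ((L : ℝ) + 1)) ^ S.card else 0

/-- Linearized Sherali-Adams constraints for a single LP row `∑ v, c v * x v ≤ dd`,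
over an arbitrary finite variable index type. -/
def SArowI (ι : Type) [Fintype ι] [DecidableEq ι] (rr : ℕ) (c : ι → ℝ) (dd : ℝ)
    (x : Finset ι → ℝ) : Prop :=
  ∀ S T : Finset ι, Disjoint S T → S.card + T.card + 1 ≤ rr →
    ∑ T' ∈ T.powerset, (-1 : ℝ) ^ T'.card *
      ((∑ v, c v * x (insert v (S ∪ T'))) - dd * x (S ∪ T')) ≤ 0

section SheraliAdams

variable {ι : Type} [DecidableEq ι]

-- The lifted value of the event "every pair of `S` is chosen and no pair of `T` is".
def inExcl (x : Finset ι → ℝ) (S T : Finset ι) : ℝ :=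
  ∑ T' ∈ T.powerset, (-1 : ℝ) ^ #T' * x (S ∪ T')

lemma inExcl_insert_of_mem_right (x : Finset ι → ℝ) (S : Finset ι) {T : Finset ι} {v : ι}
    (hv : v ∈ T) : inExcl x (insert v S) T = 0 := by
  rw [inExcl, ← insert_erase hv, sum_powerset_insert (notMem_erase v T), ← sum_add_distrib]
  refine sum_eq_zero fun T' hT' => ?_
  have hvT' : v ∉ T' := fun h => notMem_erase v T (mem_powerset.mp hT' h)
  rw [card_insert_of_notMem hvT', union_insert, insert_union, insert_idem, pow_succ]
  ring

variable [Fintype ι]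

lemma sum_powerset_lift_eq (x : Finset ι → ℝ) (c : ι → ℝ) (d : ℝ) {S T : Finset ι}
    (hd : Disjoint S T) :
    ∑ T' ∈ T.powerset, (-1 : ℝ) ^ #T' * ((∑ v, c v * x (insert v (S ∪ T'))) - d * x (S ∪ T')) =
      (∑ v ∈ S, c v - d) * inExcl x S T + ∑ v ∈ (S ∪ T)ᶜ, c v * inExcl x (insert v S) T := by
  have hlift : ∑ T' ∈ T.powerset, (-1 : ℝ) ^ #T' *
        ((∑ v, c v * x (insert v (S ∪ T'))) - d * x (S ∪ T')) =
      ∑ v, c v * inExcl x (insert v S) T - d * inExcl x S T := by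
    simp only [inExcl, mul_sub, mul_sum, sum_sub_distrib, insert_union]
    rw [sum_comm]
    congr 1
    · exact sum_congr rfl fun _ _ => sum_congr rfl fun _ _ => by ring
    · exact sum_congr rfl fun _ _ => by ring
  have hS : ∑ v ∈ S, c v * inExcl x (insert v S) T = ∑ v ∈ S, c v * inExcl x S T :=
    sum_congr rfl fun v hv => by rw [insert_eq_of_mem hv]
  have hT : ∑ v ∈ T, c v * inExcl x (insert v S) T = 0 :=
    sum_eq_zero fun v hv => by rw [inExcl_insert_of_mem_right x S hv, mul_zero]
  rw [hlift, ← sum_add_sum_compl (S ∪ T), sum_union hd, hS, hT, ← sum_mul]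
  ring

lemma SArowI.of_inExcl {r : ℕ} {c : ι → ℝ} {d : ℝ} {x : Finset ι → ℝ}
    (h : ∀ S T : Finset ι, Disjoint S T → #S + #T + 1 ≤ r →
      (∑ v ∈ S, c v - d) * inExcl x S T + ∑ v ∈ (S ∪ T)ᶜ, c v * inExcl x (insert v S) T ≤ 0) :
    SArowI ι r c d x := fun S T hd hr => (sum_powerset_lift_eq x c d hd).trans_le (h S T hd hr)

end SheraliAdams

section AltSum

variable {ι : Type} [DecidableEq ι] {F : Finset ι → Prop} [DecidablePred F] {ρ : ℝ}

def altSum (F : Finset ι → Prop) [DecidablePred F] (ρ : ℝ) (S T : Finset ι) : ℝ :=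
  ∑ R ∈ T.powerset with F (S ∪ R), (-ρ) ^ #R

lemma altSum_insert {S T : Finset ι} {a : ι} (ha : a ∉ T) :
    altSum F ρ S (insert a T) = altSum F ρ S T - ρ * altSum F ρ (insert a S) T := by
  simp only [altSum, sum_filter, sum_powerset_insert ha, mul_sum, sub_eq_add_neg,
    ← sum_neg_distrib]
  congr 1
  refine sum_congr rfl fun R hR => ?_
  have haR : a ∉ R := fun h => ha (mem_powerset.mp hR h)
  rw [union_insert, ← insert_union, card_insert_of_notMem haR, pow_succ]
  split_ifs <;> ring

lemma altSum_of_not (hF : Antitone F) {S : Finset ι} (hS : ¬ F S) (T : Finset ι) :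
    altSum F ρ S T = 0 :=
  sum_eq_zero fun _ hR => absurd (hF subset_union_left (mem_filter.mp hR).2) hS

lemma altSum_bounds (hF : Antitone F) (hρ : 0 ≤ ρ) (T : Finset ι) :
    ∀ S, F S → ρ * #T ≤ 1 → 1 - ρ * #T ≤ altSum F ρ S T ∧ altSum F ρ S T ≤ 1 := by
  induction T using Finset.induction_on with
  | empty => intro S hS _; simp [altSum, filter_singleton, hS]
  | @insert a T ha ih =>
    intro S hS hT
    rw [card_insert_of_notMem ha, Nat.cast_succ] at hT ⊢
    have hT' : ρ * #T ≤ 1 := by linarith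
    obtain ⟨h₁, h₂⟩ := ih S hS hT'
    rw [altSum_insert ha]
    by_cases haS : F (insert a S)
    · obtain ⟨h₃, h₄⟩ := ih (insert a S) haS hT'
      constructor <;> nlinarith
    · rw [altSum_of_not hF haS]
      constructor <;> nlinarith

lemma altSum_union_of_forall_not (hF : Antitone F) {S T B : Finset ι}
    (hB : ∀ b ∈ B, ¬ F (insert b S)) : altSum F ρ S (T ∪ B) = altSum F ρ S T := by
  refine sum_congr (Finset.ext fun _ => ?_) fun _ _ => rfl
  simp only [mem_filter, mem_powerset, and_congr_left_iff]
  refine fun hR => ⟨fun hRTB x hx => ?_, fun hRT => hRT.trans subset_union_left⟩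
  refine (mem_union.mp (hRTB hx)).resolve_right fun hxB => hB x hxB (hF ?_ hR)
  exact insert_subset (mem_union_right S hx) subset_union_left

lemma altSum_union_of_pairwise_not (hF : Antitone F) {S T : Finset ι} (B : Finset ι)
    (hTB : Disjoint T B) (hB : ∀ a ∈ B, ∀ b ∈ B, a ≠ b → ¬ F (insert a (insert b S))) :
    altSum F ρ S (T ∪ B) = altSum F ρ S T - ρ * ∑ b ∈ B, altSum F ρ (insert b S) T := by
  induction B using Finset.induction_on with
  | empty => simp
  | @insert a B ha ih =>
    have haTB : a ∉ T ∪ B := by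
      simp only [mem_union, not_or]
      exact ⟨disjoint_right.mp hTB (mem_insert_self a B), ha⟩
    have hBa : ∀ b ∈ B, ¬ F (insert b (insert a S)) := fun b hb =>
      hB b (mem_insert_of_mem hb) a (mem_insert_self a B) (ne_of_mem_of_not_mem hb ha)
    rw [union_insert, altSum_insert haTB, altSum_union_of_forall_not hF hBa, sum_insert ha,
      ih (disjoint_of_subset_right (subset_insert a B) hTB)
        fun x hx y hy => hB x (mem_insert_of_mem hx) y (mem_insert_of_mem hy)]
    ring

end AltSum

section PowerSolution

variable {ι : Type} [DecidableEq ι] {F : Finset ι → Prop} [DecidablePred F] {ρ : ℝ}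

def powSol (F : Finset ι → Prop) [DecidablePred F] (ρ : ℝ) (S : Finset ι) : ℝ :=
  if F S then ρ ^ #S else 0

lemma inExcl_powSol {S T : Finset ι} (hd : Disjoint S T) :
    inExcl (powSol F ρ) S T = ρ ^ #S * altSum F ρ S T := by
  rw [altSum, sum_filter, mul_sum]
  refine sum_congr rfl fun T' hT' => ?_
  rw [powSol, card_union_of_disjoint (disjoint_of_subset_right (mem_powerset.mp hT') hd),
    neg_pow, pow_add]
  split_ifs <;> ring

lemma inExcl_powSol_of_not (hF : Antitone F) {S : Finset ι} (hS : ¬ F S) (T : Finset ι) :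
    inExcl (powSol F ρ) S T = 0 :=
  sum_eq_zero fun _ _ => by rw [powSol, if_neg fun h => hS (hF subset_union_left h), mul_zero]

lemma inExcl_powSol_union (hF : Antitone F) {S T B : Finset ι} (hd : Disjoint S (T ∪ B))
    (hTB : Disjoint T B) (hB : ∀ a ∈ B, ∀ b ∈ B, a ≠ b → ¬ F (insert a (insert b S))) :
    inExcl (powSol F ρ) S (T ∪ B) =
      inExcl (powSol F ρ) S T - ∑ b ∈ B, inExcl (powSol F ρ) (insert b S) T := by
  have hST : Disjoint S T := disjoint_of_subset_right subset_union_left hd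
  rw [inExcl_powSol hd, inExcl_powSol hST, altSum_union_of_pairwise_not hF B hTB hB, mul_sub,
    mul_sum, mul_sum]
  congr 1
  refine sum_congr rfl fun b hb => ?_
  have hbS : b ∉ S := disjoint_right.mp hd (mem_union_right T hb)
  have hbT : b ∉ T := disjoint_right.mp hTB hb
  rw [inExcl_powSol (disjoint_insert_left.mpr ⟨hbT, hST⟩), card_insert_of_notMem hbS, pow_succ]
  ring

variable (hF : Antitone F) (hρ : 0 ≤ ρ) {S T : Finset ι}
include hF hρ

lemma inExcl_powSol_nonneg (hd : Disjoint S T) (hT : ρ * #T ≤ 1) :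
    0 ≤ inExcl (powSol F ρ) S T := by
  rw [inExcl_powSol hd]
  by_cases hS : F S
  · have := (altSum_bounds hF hρ T S hS hT).1
    exact mul_nonneg (pow_nonneg hρ _) (by linarith)
  · rw [altSum_of_not hF hS, mul_zero]

lemma inExcl_powSol_le (hd : Disjoint S T) (hT : ρ * #T ≤ 1) :
    inExcl (powSol F ρ) S T ≤ ρ ^ #S := by
  rw [inExcl_powSol hd]
  by_cases hS : F S
  · exact mul_le_of_le_one_right (pow_nonneg hρ _) (altSum_bounds hF hρ T S hS hT).2
  · rw [altSum_of_not hF hS, mul_zero]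
    exact pow_nonneg hρ _

lemma le_inExcl_powSol (hd : Disjoint S T) (hT : ρ * #T ≤ 1) (hS : F S) :
    ρ ^ #S * (1 - ρ * #T) ≤ inExcl (powSol F ρ) S T := by
  rw [inExcl_powSol hd]
  exact mul_le_mul_of_nonneg_left (altSum_bounds hF hρ T S hS hT).1 (pow_nonneg hρ _)

lemma sum_inExcl_powSol_insert_le {A : Finset ι} (hd : Disjoint S T) (hA : Disjoint (S ∪ T) A)
    (hpair : ∀ a ∈ A, ∀ b ∈ A, a ≠ b → ¬ F (insert a (insert b S)))
    (hTA : ρ * #(T ∪ A) ≤ 1) :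
    ∑ b ∈ A, inExcl (powSol F ρ) (insert b S) T ≤ inExcl (powSol F ρ) S T := by
  have hdA : Disjoint S (T ∪ A) :=
    disjoint_union_right.mpr ⟨hd, disjoint_of_subset_left subset_union_left hA⟩
  have := inExcl_powSol_nonneg hF hρ hdA hTA
  rw [inExcl_powSol_union hF hdA (disjoint_of_subset_left subset_union_right hA) hpair] at this
  linarith

end PowerSolution

section Rows

variable {ι : Type} [Fintype ι] [DecidableEq ι] {F : Finset ι → Prop} [DecidablePred F] {ρ : ℝ}

lemma notMem_and_disjoint_insert_of_mem_compl {S T : Finset ι} {v : ι} (hv : v ∈ (S ∪ T)ᶜ)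
    (hd : Disjoint S T) : v ∉ S ∧ Disjoint (insert v S) T := by
  simp only [mem_compl, mem_union, not_or] at hv
  exact ⟨hv.1, disjoint_insert_left.mpr ⟨hv.2, hd⟩⟩

lemma SArowI.powSol_nonneg (hF : Antitone F) (hρ : 0 ≤ ρ) {r : ℕ} (hr : ∀ n < r, ρ * n ≤ 1)
    (v₀ : ι) : SArowI ι r (fun v => if v = v₀ then -1 else 0) 0 (powSol F ρ) := by
  refine SArowI.of_inExcl fun S T hd hST => ?_
  have hT : ρ * #T ≤ 1 := hr _ (by omega)
  refine add_nonpos (mul_nonpos_of_nonpos_of_nonneg ?_ (inExcl_powSol_nonneg hF hρ hd hT))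
    (sum_nonpos fun v hv => mul_nonpos_of_nonpos_of_nonneg ?_
      (inExcl_powSol_nonneg hF hρ (notMem_and_disjoint_insert_of_mem_compl hv hd).2 hT))
  · rw [sub_zero]
    exact sum_nonpos fun v _ => by split_ifs <;> norm_num
  · split_ifs <;> norm_num

lemma SArowI.powSol_packing (hF : Antitone F) (hρ : 0 ≤ ρ) (P : ι → Prop) [DecidablePred P]
    (hP : ∀ a b, P a → P b → a ≠ b → ¬ F {a, b}) {r : ℕ}
    (hr : ∀ n < r, ρ * (n + #{v | P v}) ≤ 1) :
    SArowI ι r (fun v => if P v then 1 else 0) 1 (powSol F ρ) := by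
  refine SArowI.of_inExcl fun S T hd hST => ?_
  simp only [sum_boole, boole_mul, ← sum_filter]
  set A := {v ∈ (S ∪ T)ᶜ | P v}
  by_cases hS : F S
  swap
  · rw [inExcl_powSol_of_not hF hS, sum_eq_zero fun v _ => inExcl_powSol_of_not hF
      (fun h => hS (hF (subset_insert v S) h)) T, mul_zero, add_zero]
  have hpair : ∀ a b, P a → P b → a ≠ b → ∀ U, a ∈ U → b ∈ U → ¬ F U :=
    fun a b ha hb hab U haU hbU h =>
      hP a b ha hb hab (hF (insert_subset haU (singleton_subset_iff.mpr hbU)) h)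
  have hSA : Disjoint (S ∪ T) A :=
    disjoint_right.mpr fun v hv => mem_compl.mp (mem_filter.mp hv).1
  have hcard : #{v ∈ S | P v} ≤ 1 := card_le_one.mpr fun a ha b hb => by
    by_contra hab
    exact hpair a b (mem_filter.mp ha).2 (mem_filter.mp hb).2 hab S
      (mem_filter.mp ha).1 (mem_filter.mp hb).1 hS
  rcases Nat.le_one_iff_eq_zero_or_eq_one.mp hcard with h0 | h1
  · have hcardTA : (#(T ∪ A) : ℝ) ≤ #T + #{v | P v} := by
      exact_mod_cast (card_union_le T A).trans
        (Nat.add_le_add_left (card_le_card (filter_subset_filter P (subset_univ _))) _)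
    have := sum_inExcl_powSol_insert_le hF hρ hd hSA
      (fun a ha b hb hab => hpair a b (mem_filter.mp ha).2 (mem_filter.mp hb).2 hab _
        (mem_insert_self a _) (mem_insert_of_mem (mem_insert_self b S)))
      ((mul_le_mul_of_nonneg_left hcardTA hρ).trans (hr _ (by omega)))
    rw [h0]
    push_cast
    linarith
  · obtain ⟨u, hu⟩ := card_eq_one.mp h1
    have huS : u ∈ S ∧ P u := mem_filter.mp (hu ▸ mem_singleton_self u)
    refine le_of_eq ?_
    rw [h1, sum_eq_zero fun v hv => inExcl_powSol_of_not hF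
      (hpair v u (mem_filter.mp hv).2 huS.2
        (fun h => disjoint_left.mp hSA (mem_union_left T (h ▸ huS.1)) hv) _
        (mem_insert_self v S) (mem_insert_of_mem huS.1)) T]
    norm_num

lemma sum_sub_mul_le_sum_filter (w : ι → ℝ) (hw : ∀ v, 0 ≤ w v) (blk : ι → Finset ι)
    (hself : ∀ u, u ∈ blk u) (hcover : ∀ S v, F S → (∀ u ∈ S, v ∉ blk u) → F (insert v S))
    {B : ℝ} (hB : ∀ u, ∑ v ∈ blk u, w v ≤ B) {S : Finset ι} (hS : F S) (T : Finset ι) :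
    ∑ v, w v - (#S + #T) * B ≤ ∑ v ∈ (S ∪ T)ᶜ with F (insert v S), w v := by
  set G := {v ∈ (S ∪ T)ᶜ | F (insert v S)}
  have hpoint : ∀ v, w v ≤ (if v ∈ G then w v else 0) + (if v ∈ T then w v else 0) +
      ∑ u ∈ S, if v ∈ blk u then w v else 0 := by
    intro v
    have h₀ : 0 ≤ ∑ u ∈ S, if v ∈ blk u then w v else 0 :=
      sum_nonneg fun _ _ => by split_ifs <;> simp [hw]
    by_cases hvT : v ∈ T
    · split_ifs <;> linarith [hw v]
    by_cases hblk : ∃ u ∈ S, v ∈ blk u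
    · obtain ⟨u, hu, hvu⟩ := hblk
      have := single_le_sum (f := fun u => if v ∈ blk u then w v else 0)
        (fun _ _ => by split_ifs <;> simp [hw]) hu
      simp only [hvu, if_true] at this
      split_ifs <;> linarith [hw v]
    push Not at hblk
    have hvS : v ∉ S := fun h => hblk v h (hself v)
    have hvG : v ∈ G := mem_filter.mpr ⟨by simp [hvS, hvT], hcover S v hS hblk⟩
    simp only [hvG, hvT, if_true, if_false]
    linarith
  have hwB : ∀ v, w v ≤ B := fun v =>
    (single_le_sum (fun u _ => hw u) (hself v)).trans (hB v)
  calc ∑ v, w v - (#S + #T) * B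
      ≤ ∑ v ∈ G, w v + ∑ v ∈ T, w v + ∑ u ∈ S, ∑ v ∈ blk u, w v - (#S + #T) * B := by
        gcongr
        refine (sum_le_sum fun v _ => hpoint v).trans_eq ?_
        rw [sum_add_distrib, sum_add_distrib, sum_comm]
        simp only [sum_ite_mem, univ_inter]
    _ ≤ ∑ v ∈ G, w v + #T * B + #S * B - (#S + #T) * B := by
        gcongr
        · exact (sum_le_card_nsmul T w B fun v _ => hwB v).trans_eq (nsmul_eq_mul _ _)
        · exact (sum_le_card_nsmul S _ B fun u _ => hB u).trans_eq (nsmul_eq_mul _ _)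
    _ = ∑ v ∈ G, w v := by ring

lemma SArowI.powSol_covering (hF : Antitone F) (hρ : 0 ≤ ρ) (w : ι → ℝ) (hw : ∀ v, 0 ≤ w v)
    (blk : ι → Finset ι) (hself : ∀ u, u ∈ blk u)
    (hcover : ∀ S v, F S → (∀ u ∈ S, v ∉ blk u) → F (insert v S)) {B δ D : ℝ}
    (hB : ∀ u, ∑ v ∈ blk u, w v ≤ B) (hδ : δ ≤ 1) {r : ℕ}
    (hr : ∀ n < r, ρ * n ≤ δ ∧ D ≤ ρ * (1 - δ) * (∑ v, w v - n * B)) :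
    SArowI ι r (fun v => -w v) (-D) (powSol F ρ) := by
  refine SArowI.of_inExcl fun S T hd hST => ?_
  simp only [sum_neg_distrib, neg_mul, sub_neg_eq_add]
  by_cases hS : F S
  swap
  · have hzero : ∀ v, inExcl (powSol F ρ) (insert v S) T = 0 := fun v =>
      inExcl_powSol_of_not hF (fun h => hS (hF (subset_insert v S) h)) T
    simp [inExcl_powSol_of_not hF hS, hzero]
  have hρT : ρ * #T ≤ δ := (hr #T (by omega)).1
  have hD : D ≤ ρ * (1 - δ) * (∑ v, w v - (#S + #T) * B) := by
    exact_mod_cast (hr (#S + #T) (by omega)).2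
  set G := {v ∈ (S ∪ T)ᶜ | F (insert v S)}
  set M := ∑ v ∈ G, w v
  have hM : ∑ v, w v - (#S + #T) * B ≤ M :=
    sum_sub_mul_le_sum_filter w hw blk hself hcover hB hS T
  have hM0 : 0 ≤ M := sum_nonneg fun v _ => hw v
  have hz0 := inExcl_powSol_nonneg hF hρ hd (hρT.trans hδ)
  have hz1 := inExcl_powSol_le hF hρ hd (hρT.trans hδ)
  have hgood : ρ ^ (#S + 1) * (1 - δ) * M ≤
      ∑ v ∈ (S ∪ T)ᶜ, w v * inExcl (powSol F ρ) (insert v S) T := by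
    rw [mul_sum]
    refine (sum_le_sum fun v hv => ?_).trans (sum_le_sum_of_subset_of_nonneg (filter_subset _ _)
      fun v hv _ => mul_nonneg (hw v) (inExcl_powSol_nonneg hF hρ
        (notMem_and_disjoint_insert_of_mem_compl hv hd).2 (hρT.trans hδ)))
    obtain ⟨hv, hvS⟩ := mem_filter.mp hv
    obtain ⟨hvS', hd'⟩ := notMem_and_disjoint_insert_of_mem_compl hv hd
    have := le_inExcl_powSol hF hρ hd' (hρT.trans hδ) hvS
    rw [card_insert_of_notMem hvS'] at this
    have : ρ ^ (#S + 1) * (1 - δ) ≤ ρ ^ (#S + 1) * (1 - ρ * #T) :=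
      mul_le_mul_of_nonneg_left (by linarith) (pow_nonneg hρ _)
    nlinarith [hw v]
  have hK : D ≤ ρ * (1 - δ) * M :=
    hD.trans (mul_le_mul_of_nonneg_left hM (mul_nonneg hρ (by linarith)))
  have hK0 : 0 ≤ ρ * (1 - δ) * M := mul_nonneg (mul_nonneg hρ (by linarith)) hM0
  have hwS : 0 ≤ ∑ v ∈ S, w v := sum_nonneg fun v _ => hw v
  have hpow : ρ * (1 - δ) * M * ρ ^ #S = ρ ^ (#S + 1) * (1 - δ) * M := by ring
  linarith [mul_le_mul_of_nonneg_right hK hz0, mul_le_mul_of_nonneg_left hz1 hK0,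
    mul_nonneg hwS hz0]

end Rows

-- `n` pairs block mass at most `n (2Λ+4) X ≤ 2EΛ²X`, and `(1-E)²(1-2E) ≥ 1-4E`.
lemma objective_margin {E Λ X n : ℝ} (hn0 : 0 ≤ n) (hn : n + 1 ≤ E * Λ) (hE : E ≤ 1 / 4)
    (hΛ : 0 < Λ) (hX : 0 ≤ X) :
    (1 - 4 * E) * (Λ * X) ≤ (1 - E) / Λ * (1 - E) * (Λ * (Λ * X) - n * ((2 * Λ + 4) * X)) := by
  have hblocked : n * (2 * Λ + 4) ≤ 2 * E * Λ ^ 2 := by nlinarith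
  have hE0 : 0 ≤ E := by nlinarith
  have hcubic : 1 - 4 * E ≤ (1 - E) ^ 2 * (1 - 2 * E) := by nlinarith [sq_nonneg E]
  have hmass : (1 - 2 * E) * Λ ^ 2 ≤ Λ ^ 2 - n * (2 * Λ + 4) := by linarith
  rw [div_mul_eq_mul_div, div_mul_eq_mul_div, le_div_iff₀ hΛ]
  have := mul_le_mul_of_nonneg_left hmass (sq_nonneg (1 - E))
  have := mul_le_mul_of_nonneg_right hcubic (sq_nonneg Λ)
  have := mul_le_mul_of_nonneg_right (a := X) (by linarith : (1 - 4 * E) * Λ ^ 2 ≤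
    (1 - E) ^ 2 * (Λ ^ 2 - n * (2 * Λ + 4))) hX
  nlinarith

lemma sum_range_ite_overlap_le {p : ℕ} (hp : 0 < p) (t P N : ℕ) :
    ∑ m ∈ range N, (if m * p < t + P ∧ t < m * p + p then p else 0) ≤ P + 2 * p := by
  rw [← sum_filter, sum_const, smul_eq_mul]
  have hsub : {m ∈ range N | m * p < t + P ∧ t < m * p + p} ⊆ Icc (t / p) ((t + P) / p) :=
    fun m hm => by
      obtain ⟨h₁, h₂⟩ := (mem_filter.mp hm).2
      refine mem_Icc.mpr ⟨Nat.le_of_lt_succ ((Nat.div_lt_iff_lt_mul hp).mpr (by linarith)),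
        (Nat.le_div_iff_mul_le hp).mpr h₁.le⟩
  have h₁ := Nat.div_mul_le_self (t + P) p
  have h₂ := Nat.lt_div_mul_add (a := t) hp
  calc #{m ∈ range N | m * p < t + P ∧ t < m * p + p} * p
      ≤ ((t + P) / p + 1 - t / p) * p := by
        rw [← Nat.card_Icc]
        exact Nat.mul_le_mul_right p (card_le_card hsub)
    _ ≤ P + 2 * p := by
        rw [Nat.sub_mul, add_mul]
        omega

lemma sum_two_pow_sub_le (L : ℕ) : ∑ ℓ : Fin (L + 1), 2 ^ (L - (ℓ : ℕ)) ≤ 2 * 2 ^ L := by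
  rw [Fin.sum_univ_eq_sum_range (fun i => 2 ^ (L - i)), ← sum_range_reflect,
    sum_congr rfl fun i hi => by rw [show L - (L + 1 - 1 - i) = i by
      have := mem_range.mp hi; omega], Nat.geomSum_eq le_rfl]
  omega

namespace SAIdx

variable {L : ℕ}

lemma istart_eq (v : SAIdx L) :
    istart L v = (finProdFinEquiv (v.1.2, v.2) : ℕ) * treeSize L v.1 := by
  simp only [istart, treeRel, treeSize, finProdFinEquiv_apply_val]
  ring

lemma ext_of_level (v w : SAIdx L) (hℓ : v.1.1 = w.1.1)
    (hm : (finProdFinEquiv (v.1.2, v.2) : ℕ) = finProdFinEquiv (w.1.2, w.2)) : v = w := by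
  obtain ⟨⟨ℓ, k⟩, a⟩ := v
  obtain ⟨⟨ℓ', k'⟩, a'⟩ := w
  obtain rfl : ℓ = ℓ' := hℓ
  obtain ⟨rfl, rfl⟩ := Prod.ext_iff.mp (finProdFinEquiv.injective (Fin.ext hm))
  rfl

-- The pairs of level `ℓ` start exactly at the multiples `m * 2^(L-ℓ)` with `m < 2^ℓ (L+1)`:
-- they tile the horizon by intervals of length `2^(L-ℓ)`.
lemma sum_eq_sum_levels {M : Type} [AddCommMonoid M] (f : ℕ → ℕ → M) :
    ∑ v : SAIdx L, f (istart L v) (treeSize L v.1) =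
      ∑ ℓ : Fin (L + 1), ∑ m ∈ range (2 ^ (ℓ : ℕ) * (L + 1)),
        f (m * 2 ^ (L - (ℓ : ℕ))) (2 ^ (L - (ℓ : ℕ))) := by
  calc ∑ v : SAIdx L, f (istart L v) (treeSize L v.1)
      = ∑ j : TreeJob L, ∑ a : Fin (L + 1),
          f (istart L ((j, a) : SAIdx L)) (treeSize L j) := Fintype.sum_prod_type _
    _ = ∑ ℓ : Fin (L + 1), ∑ k : Fin (2 ^ (ℓ : ℕ)), ∑ a : Fin (L + 1),
          f (istart L ((⟨ℓ, k⟩, a) : SAIdx L)) (2 ^ (L - (ℓ : ℕ))) := Fintype.sum_sigma _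
    _ = _ := sum_congr rfl fun ℓ _ => by
      rw [← Fintype.sum_prod_type', ← Fin.sum_univ_eq_sum_range]
      exact Fintype.sum_equiv finProdFinEquiv _ _ fun x =>
        congrArg (f · _) (istart_eq ((⟨ℓ, x.1⟩, x.2) : SAIdx L))

end SAIdx

section Instance

variable {L : ℕ} {ε : ℝ}

lemma treeSize_le (j : TreeJob L) : treeSize L j ≤ 2 ^ L :=
  Nat.pow_le_pow_right two_pos (Nat.sub_le _ _)

lemma sum_treeSize (L : ℕ) : ∑ v : SAIdx L, treeSize L v.1 = (L + 1) * ((L + 1) * 2 ^ L) := by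
  have h := SAIdx.sum_eq_sum_levels (L := L) fun _ p => p
  simp only [sum_const, card_range, smul_eq_mul] at h
  rw [h, sum_congr rfl fun ℓ _ => by
    rw [mul_right_comm, ← pow_add, Nat.add_sub_cancel' (Nat.le_of_lt_succ ℓ.2)]]
  simp [mul_comm]

lemma card_filter_fst_eq (j : TreeJob L) : #{v : SAIdx L | v.1 = j} = L + 1 :=
  calc #{v : SAIdx L | v.1 = j}
      = ∑ v : SAIdx L, if v.1 = j then 1 else 0 := card_filter _ _
    _ = ∑ j' : TreeJob L, ∑ _a : Fin (L + 1), if j' = j then 1 else 0 := Fintype.sum_prod_type _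
    _ = L + 1 := by simp

lemma card_filter_covers_le (t' : ℕ) :
    #{v : SAIdx L | istart L v < t' ∧ t' ≤ istart L v + treeSize L v.1} ≤ L + 1 := by
  refine (card_le_card_of_injOn (fun v => v.1.1) (fun _ _ => mem_univ _) ?_).trans_eq
    (by simp)
  intro v hv w hw hℓ
  obtain ⟨hv₁, hv₂⟩ := (mem_filter.mp hv).2
  obtain ⟨hw₁, hw₂⟩ := (mem_filter.mp hw).2
  have hp : treeSize L w.1 = treeSize L v.1 := by
    simp only [treeSize]
    rw [show (w.1.1 : ℕ) = v.1.1 from congrArg Fin.val hℓ.symm]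
  rw [SAIdx.istart_eq] at hv₁ hv₂ hw₁ hw₂
  rw [hp] at hw₁ hw₂
  refine SAIdx.ext_of_level v w hℓ (Nat.le_antisymm ?_ ?_)
  · exact Nat.le_of_lt_succ (Nat.lt_of_mul_lt_mul_right (a := treeSize L v.1) (by
      rw [Nat.succ_mul]; omega))
  · exact Nat.le_of_lt_succ (Nat.lt_of_mul_lt_mul_right (a := treeSize L v.1) (by
      rw [Nat.succ_mul]; omega))

def conflicts (L : ℕ) (u : SAIdx L) : Finset (SAIdx L) :=
  {v | v.1 = u.1 ∨
    (istart L v < istart L u + treeSize L u.1 ∧ istart L u < istart L v + treeSize L v.1)}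

lemma self_mem_conflicts (u : SAIdx L) : u ∈ conflicts L u :=
  mem_filter.mpr ⟨mem_univ u, Or.inl rfl⟩

lemma ConflictFree.insert {S : Finset (SAIdx L)} {v : SAIdx L} (hS : ConflictFree L S)
    (hv : ∀ u ∈ S, v ∉ conflicts L u) : ConflictFree L (insert v S) := by
  have hvu : ∀ u ∈ S, v.1 ≠ u.1 ∧ (istart L v + treeSize L v.1 ≤ istart L u ∨
      istart L u + treeSize L u.1 ≤ istart L v) := fun u hu => by
    have := hv u hu
    simp only [conflicts, mem_filter, mem_univ, true_and, not_or, not_and_or, not_lt] at this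
    exact ⟨this.1, by omega⟩
  intro a ha b hb hab
  rcases mem_insert.mp ha with rfl | haS <;> rcases mem_insert.mp hb with rfl | hbS
  · exact absurd rfl hab
  · exact hvu b hbS
  · obtain ⟨h₁, h₂⟩ := hvu a haS
    exact ⟨h₁.symm, h₂.symm⟩
  · exact hS a haS b hbS hab

lemma sum_treeSize_conflicts_le (u : SAIdx L) :
    ∑ v ∈ conflicts L u, treeSize L v.1 ≤ (2 * (L + 1) + 4) * 2 ^ L := by
  have hjob : ∑ v ∈ {v : SAIdx L | v.1 = u.1}, treeSize L v.1 ≤ (L + 1) * 2 ^ L := by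
    rw [sum_congr rfl fun v hv => by rw [(mem_filter.mp hv).2], sum_const, smul_eq_mul,
      card_filter_fst_eq]
    exact Nat.mul_le_mul_left _ (treeSize_le _)
  have hoverlap : ∑ v ∈ {v : SAIdx L | istart L v < istart L u + treeSize L u.1 ∧
      istart L u < istart L v + treeSize L v.1}, treeSize L v.1 ≤ (L + 1) * 2 ^ L + 4 * 2 ^ L := by
    rw [sum_filter, SAIdx.sum_eq_sum_levels fun s p =>
      if s < istart L u + treeSize L u.1 ∧ istart L u < s + p then p else 0]
    calc _ ≤ ∑ ℓ : Fin (L + 1), (treeSize L u.1 + 2 * 2 ^ (L - (ℓ : ℕ))) :=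
          sum_le_sum fun ℓ _ => sum_range_ite_overlap_le (Nat.two_pow_pos _) _ _ _
      _ = (L + 1) * treeSize L u.1 + 2 * ∑ ℓ : Fin (L + 1), 2 ^ (L - (ℓ : ℕ)) := by
          simp [sum_add_distrib, mul_sum]
      _ ≤ (L + 1) * 2 ^ L + 4 * 2 ^ L := by
          have := sum_two_pow_sub_le L
          have := Nat.mul_le_mul_left (L + 1) (treeSize_le u.1)
          omega
  rw [conflicts, filter_or]
  calc _ ≤ _ :=
        (sum_union_inter (f := fun v : SAIdx L => treeSize L v.1)).symm ▸ Nat.le_add_right _ _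
    _ ≤ (L + 1) * 2 ^ L + ((L + 1) * 2 ^ L + 4 * 2 ^ L) := add_le_add hjob hoverlap
    _ = (2 * (L + 1) + 4) * 2 ^ L := by ring

lemma conflictFree_antitone (L : ℕ) : Antitone (ConflictFree L) :=
  fun _ _ h hS a ha b hb hab => hS a (h ha) b (h hb) hab

lemma add_one_le_of_lt_floor {n : ℕ} (hn : n < ⌊(ε / 4) * ((L : ℝ) + 1)⌋₊) :
    (n : ℝ) + 1 ≤ ε / 4 * ((L : ℝ) + 1) := by
  exact_mod_cast (Nat.le_floor_iff' n.succ_ne_zero).mp hn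

lemma rho_nonneg (hε1 : ε ≤ 1) : 0 ≤ (1 - ε / 4) / ((L : ℝ) + 1) :=
  div_nonneg (by linarith) (by positivity)

lemma rho_mul_le {n : ℕ} (hn : n < ⌊(ε / 4) * ((L : ℝ) + 1)⌋₊) :
    (1 - ε / 4) / ((L : ℝ) + 1) * n ≤ ε / 4 := by
  have h := add_one_le_of_lt_floor hn
  have hΛ : (0 : ℝ) < L + 1 := by positivity
  have hE : 0 ≤ ε / 4 := by nlinarith
  rw [div_mul_eq_mul_div, div_le_iff₀ hΛ]
  nlinarith [(n.cast_nonneg : (0 : ℝ) ≤ n)]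

lemma rho_mul_add_le (hε1 : ε ≤ 1) {n k : ℕ} (hn : n < ⌊(ε / 4) * ((L : ℝ) + 1)⌋₊)
    (hk : k ≤ L + 1) : (1 - ε / 4) / ((L : ℝ) + 1) * (n + k) ≤ 1 := by
  have hk' : (k : ℝ) ≤ L + 1 := by exact_mod_cast hk
  have hρΛ : (1 - ε / 4) / ((L : ℝ) + 1) * (L + 1) = 1 - ε / 4 :=
    div_mul_cancel₀ _ (by positivity)
  rw [mul_add]
  linarith [rho_mul_le hn, mul_le_mul_of_nonneg_left hk' (rho_nonneg (L := L) hε1)]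

lemma SArowI.xsol_nonneg (hε1 : ε ≤ 1) (v₀ : SAIdx L) :
    SArowI (SAIdx L) ⌊(ε / 4) * ((L : ℝ) + 1)⌋₊
      (fun v => if v = v₀ then -1 else 0) 0 (xsol L ε) :=
  SArowI.powSol_nonneg (conflictFree_antitone L) (rho_nonneg hε1)
    (fun _ hn => (rho_mul_le hn).trans (by linarith)) v₀

lemma SArowI.xsol_job (hε1 : ε ≤ 1) (j₀ : TreeJob L) :
    SArowI (SAIdx L) ⌊(ε / 4) * ((L : ℝ) + 1)⌋₊
      (fun v => if v.1 = j₀ then 1 else 0) 1 (xsol L ε) :=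
  SArowI.powSol_packing (conflictFree_antitone L) (rho_nonneg hε1) (fun v => v.1 = j₀)
    (fun a b ha hb hab hS => (hS a (mem_insert_self a _) b
      (mem_insert_of_mem (mem_singleton_self b)) hab).1 (ha.trans hb.symm))
    fun _ hn => rho_mul_add_le hε1 hn (card_filter_fst_eq j₀).le

lemma SArowI.xsol_time (hε1 : ε ≤ 1) (t' : ℕ) :
    SArowI (SAIdx L) ⌊(ε / 4) * ((L : ℝ) + 1)⌋₊
      (fun v => if istart L v < t' ∧ t' ≤ istart L v + treeSize L v.1 then 1 else 0) 1
      (xsol L ε) :=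
  SArowI.powSol_packing (conflictFree_antitone L) (rho_nonneg hε1)
    (fun v => istart L v < t' ∧ t' ≤ istart L v + treeSize L v.1)
    (fun a b ha hb hab hS => by
      have := (hS a (mem_insert_self a _) b (mem_insert_of_mem (mem_singleton_self b)) hab).2
      omega)
    fun _ hn => rho_mul_add_le hε1 hn (card_filter_covers_le t')

lemma SArowI.xsol_objective (hε1 : ε ≤ 1) :
    SArowI (SAIdx L) ⌊(ε / 4) * ((L : ℝ) + 1)⌋₊
      (fun v => -(treeSize L v.1 : ℝ)) (-((1 - ε) * (((L : ℝ) + 1) * 2 ^ L))) (xsol L ε) := by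
  have hmass : ∑ v : SAIdx L, (treeSize L v.1 : ℝ) = (L + 1) * ((L + 1) * 2 ^ L) := by
    exact_mod_cast sum_treeSize L
  refine SArowI.powSol_covering (conflictFree_antitone L) (rho_nonneg hε1)
    (fun v => (treeSize L v.1 : ℝ)) (fun _ => Nat.cast_nonneg _) (conflicts L)
    self_mem_conflicts (fun _ _ hS hv => hS.insert hv) (B := (2 * ((L : ℝ) + 1) + 4) * 2 ^ L)
    (fun u => by exact_mod_cast sum_treeSize_conflicts_le u) (δ := ε / 4) (by linarith)
    fun n hn => ⟨rho_mul_le hn, ?_⟩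
  rw [hmass, show 1 - ε = 1 - 4 * (ε / 4) by ring]
  exact objective_margin n.cast_nonneg (add_one_le_of_lt_floor hn) (by linarith) (by positivity)
    (by positivity)

end Instance

theorem stmt14_general (L : ℕ) (ε : ℝ) (hε1 : ε ≤ 1) :
    xsol L ε ∅ = 1 ∧
    SArowI (SAIdx L) ⌊(ε / 4) * ((L : ℝ) + 1)⌋₊
      (fun v => -(treeSize L v.1 : ℝ)) (-((1 - ε) * (((L : ℝ) + 1) * 2 ^ L)))
      (xsol L ε) ∧
    (∀ j₀ : TreeJob L, SArowI (SAIdx L) ⌊(ε / 4) * ((L : ℝ) + 1)⌋₊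
      (fun v => if v.1 = j₀ then 1 else 0) 1 (xsol L ε)) ∧
    (∀ t' : ℕ, SArowI (SAIdx L) ⌊(ε / 4) * ((L : ℝ) + 1)⌋₊
      (fun v => if istart L v < t' ∧ t' ≤ istart L v + treeSize L v.1 then 1 else 0) 1
      (xsol L ε)) ∧
    (∀ v₀ : SAIdx L, SArowI (SAIdx L) ⌊(ε / 4) * ((L : ℝ) + 1)⌋₊
      (fun v => if v = v₀ then -1 else 0) 0 (xsol L ε)) :=
  ⟨by simp [xsol, ConflictFree], SArowI.xsol_objective hε1, SArowI.xsol_job hε1,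
    SArowI.xsol_time hε1, SArowI.xsol_nonneg hε1⟩

/-- Sherali-Adams feasibility of the laminar gap instance. With
`ε' = ε/4` and `q = ⌊ε'(L+1)⌋` rounds, the assignment `xsol` is a feasible solution to
the `q`-round Sherali-Adams lift of the LP with variables `x_{j,t}`, the objective
constraint `∑ x_{j,t} p_j ≥ (1−ε)T`, the per-job constraints `∑_t x_{j,t} ≤ 1`, the
per-time congestion constraints, and nonnegativity (`T = (L+1)·2^L`). -/
theorem stmt14 (L : ℕ) (hL : 1 ≤ L) (ε : ℝ) (hε0 : 0 < ε) (hε1 : ε ≤ 1) :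
    xsol L ε ∅ = 1 ∧
    SArowI (SAIdx L) ⌊(ε / 4) * ((L : ℝ) + 1)⌋₊
      (fun v => -(treeSize L v.1 : ℝ)) (-((1 - ε) * (((L : ℝ) + 1) * 2 ^ L)))
      (xsol L ε) ∧
    (∀ j₀ : TreeJob L, SArowI (SAIdx L) ⌊(ε / 4) * ((L : ℝ) + 1)⌋₊
      (fun v => if v.1 = j₀ then 1 else 0) 1 (xsol L ε)) ∧
    (∀ t' : ℕ, SArowI (SAIdx L) ⌊(ε / 4) * ((L : ℝ) + 1)⌋₊
      (fun v => if istart L v < t' ∧ t' ≤ istart L v + treeSize L v.1 then 1 else 0) 1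
      (xsol L ε)) ∧
    (∀ v₀ : SAIdx L, SArowI (SAIdx L) ⌊(ε / 4) * ((L : ℝ) + 1)⌋₊
      (fun v => if v = v₀ then -1 else 0) 0 (xsol L ε)) :=
  stmt14_general L ε hε1
end

section
/- Extension of a partial schedule by reinserting discarded tasks: given a valid schedule S: A \ D → [m] × [T] of all tasks except a discarded set D (valid meaning: injective into machine-slot pairs, tasks of the same job on one machine, and a ≺ a' implies the slot of a precedes the slot of a'), one can construct a valid schedule S*: A → [m] × [T + |D|] of all tasks, by inserting each discarded task into a freshly created private time slot (shifting all later slots by one), placed at the earliest position consistent with precedence and assigned to the machine of its job. Hence the makespan increases by at most |D|. -/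
open Finset

/-- extension of a partial schedule by reinserting discarded tasks.
Tasks `A` (unit length, with job assignment `jobOf` and a strict partial order `aprec`
of task precedences) are scheduled by `S` on `m` machines in time slots `[0, T)`,
validly on the complement of the discarded set `D`: injectively into (machine, slot)
pairs, tasks of a job on one machine, and `a ≺ b` implies the slot of `a` precedes that
of `b`. Then there is a valid schedule `S'` of all tasks using slots `[0, T + |D|)`;
hence the makespan increases by at most `|D|`. -/
theorem stmt17 (J A : Type) [Fintype A] [DecidableEq A]
    (m T : ℕ) (jobOf : A → J) (aprec : A → A → Prop)
    (htrans : Transitive aprec) (hirrefl : ∀ a, ¬ aprec a a)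
    (D : Finset A) (S : A → Fin m × ℕ)
    (hT : ∀ a ∉ D, (S a).2 < T)
    (hinj : ∀ a ∉ D, ∀ b ∉ D, a ≠ b → S a ≠ S b)
    (hjob : ∀ a ∉ D, ∀ b ∉ D, jobOf a = jobOf b → (S a).1 = (S b).1)
    (hprec : ∀ a ∉ D, ∀ b ∉ D, aprec a b → (S a).2 < (S b).2) :
    ∃ S' : A → Fin m × ℕ,
      (∀ a, (S' a).2 < T + D.card) ∧
      (∀ a b, a ≠ b → S' a ≠ S' b) ∧
      (∀ a b, jobOf a = jobOf b → (S' a).1 = (S' b).1) ∧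
      (∀ a b, aprec a b → (S' a).2 < (S' b).2) := by
  classical
  suffices H : ∀ n : ℕ, ∀ (D : Finset A) (T : ℕ) (S : A → Fin m × ℕ),
      D.card = n →
      (∀ a ∉ D, (S a).2 < T) →
      (∀ a ∉ D, ∀ b ∉ D, a ≠ b → S a ≠ S b) →
      (∀ a ∉ D, ∀ b ∉ D, jobOf a = jobOf b → (S a).1 = (S b).1) →
      (∀ a ∉ D, ∀ b ∉ D, aprec a b → (S a).2 < (S b).2) →
      ∃ S' : A → Fin m × ℕ,
        (∀ a, (S' a).2 < T + n) ∧
        (∀ a b, a ≠ b → S' a ≠ S' b) ∧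
        (∀ a b, jobOf a = jobOf b → (S' a).1 = (S' b).1) ∧
        (∀ a b, aprec a b → (S' a).2 < (S' b).2) by
    exact H D.card D T S rfl hT hinj hjob hprec
  intro n
  induction n with
  | zero =>
    intro D T S hcard hT hinj hjob hprec
    have hD : D = ∅ := Finset.card_eq_zero.mp hcard
    subst hD
    exact ⟨S, fun a => by simpa using hT a (by simp),
      fun a b hab => hinj a (by simp) b (by simp) hab,
      fun a b h => hjob a (by simp) b (by simp) h,
      fun a b h => hprec a (by simp) b (by simp) h⟩
  | succ n ih =>
    intro D T S hcard hT hinj hjob hprec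
    obtain ⟨d, hd⟩ : D.Nonempty := Finset.card_pos.mp (by omega)
    set D' := D.erase d with hD'
    have hcard' : D'.card = n := by
      rw [hD', Finset.card_erase_of_mem hd]; omega
    have hmemD : ∀ a, a ∉ D' → a ≠ d → a ∉ D := by
      intro a ha hne hmem
      exact ha (Finset.mem_erase.mpr ⟨hne, hmem⟩)
    set P := univ.filter (fun a => a ∉ D ∧ aprec a d) with hP
    set t := P.sup (fun a => (S a).2 + 1) with ht
    have hPmem : ∀ a, a ∈ P ↔ (a ∉ D ∧ aprec a d) := by
      intro a; simp [hP]
    set M : Fin m :=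
      if h : ∃ b, b ∉ D ∧ jobOf b = jobOf d then (S h.choose).1 else (S d).1 with hM
    set sh : ℕ → ℕ := fun s => if t ≤ s then s + 1 else s with hsh
    set S'' : A → Fin m × ℕ := fun a =>
      if a = d then (M, t) else ((S a).1, sh (S a).2) with hS''
    have hsh_mono : ∀ s s' : ℕ, s < s' → sh s < sh s' := by
      intro s s' hss; simp only [hsh]; split_ifs <;> omega
    have hsh_ne : ∀ s, sh s ≠ t := by
      intro s; simp only [hsh]; split_ifs <;> omega
    have hsh_le : ∀ s, sh s ≤ s + 1 := by
      intro s; simp only [hsh]; split_ifs <;> omega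
    have hsh_inj : ∀ s s' : ℕ, sh s = sh s' → s = s' := by
      intro s s'; simp only [hsh]; split_ifs <;> omega
    have htT : t ≤ T := by
      apply Finset.sup_le
      intro a haP
      have := (hPmem a).mp haP
      have := hT a this.1
      omega
    have hSd : S'' d = (M, t) := by simp [hS'']
    have hSnd : ∀ a, a ≠ d → S'' a = ((S a).1, sh (S a).2) := by
      intro a ha; simp [hS'', ha]
    -- apply induction hypothesis
    obtain ⟨S', h1, h2, h3, h4⟩ := ih D' (T + 1) S'' hcard'
      (by -- bound
        intro a ha
        by_cases had : a = d
        · subst had; rw [hSd]; simpa using Nat.lt_succ_of_le htT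
        · rw [hSnd a had]
          have := hT a (hmemD a ha had)
          have := hsh_le (S a).2
          simp only []
          omega)
      (by -- injectivity
        intro a ha b hb hab
        by_cases had : a = d
        · have hbd : b ≠ d := fun h => hab (had.trans h.symm)
          rw [had, hSd, hSnd b hbd]
          intro h
          exact hsh_ne (S b).2 ((Prod.ext_iff.mp h).2.symm)
        · by_cases hbd : b = d
          · rw [hbd, hSd, hSnd a had]
            intro h
            exact hsh_ne (S a).2 (Prod.ext_iff.mp h).2
          · rw [hSnd a had, hSnd b hbd]
            intro h
            obtain ⟨h1', h2'⟩ := Prod.ext_iff.mp h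
            exact hinj a (hmemD a ha had) b (hmemD b hb hbd) hab
              (Prod.ext h1' (hsh_inj _ _ h2'))
      )
      (by -- jobs
        intro a ha b hb hj
        by_cases had : a = d
        · rw [had] at hj ⊢
          by_cases hbd : b = d
          · rw [hbd]
          · rw [hSd, hSnd b hbd]
            have hbD : b ∉ D := hmemD b hb hbd
            have hex : ∃ c, c ∉ D ∧ jobOf c = jobOf d := ⟨b, hbD, hj.symm⟩
            simp only [hM, dif_pos hex]
            exact hjob _ hex.choose_spec.1 b hbD (hex.choose_spec.2.trans hj)
        · by_cases hbd : b = d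
          · rw [hbd] at hj ⊢
            rw [hSd, hSnd a had]
            have haD : a ∉ D := hmemD a ha had
            have hex : ∃ c, c ∉ D ∧ jobOf c = jobOf d := ⟨a, haD, hj⟩
            simp only [hM, dif_pos hex]
            exact (hjob _ hex.choose_spec.1 a haD (hex.choose_spec.2.trans hj.symm)).symm
          · rw [hSnd a had, hSnd b hbd]
            exact hjob a (hmemD a ha had) b (hmemD b hb hbd) hj)
      (by -- precedence
        intro a ha b hb hpr
        by_cases had : a = d
        · rw [had] at hpr ⊢
          by_cases hbd : b = d
          · rw [hbd] at hpr; exact absurd hpr (hirrefl d)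
          · rw [hSd, hSnd b hbd]
            have hbD : b ∉ D := hmemD b hb hbd
            have htb : t ≤ (S b).2 := by
              apply Finset.sup_le
              intro c hcP
              obtain ⟨hcD, hcd⟩ := (hPmem c).mp hcP
              exact hprec c hcD b hbD (htrans hcd hpr)
            simp only [hsh, if_pos htb]
            omega
        · by_cases hbd : b = d
          · rw [hbd] at hpr ⊢
            rw [hSd, hSnd a had]
            have haD : a ∉ D := hmemD a ha had
            have haP : a ∈ P := (hPmem a).mpr ⟨haD, hpr⟩
            have : (S a).2 + 1 ≤ t := Finset.le_sup (f := fun a => (S a).2 + 1) haP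
            simp only [hsh]
            split_ifs <;> omega
          · rw [hSnd a had, hSnd b hbd]
            exact hsh_mono _ _
              (hprec a (hmemD a ha had) b (hmemD b hb hbd) hpr))
    refine ⟨S', ?_, h2, h3, h4⟩
    intro a
    have := h1 a
    omega
end
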